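/- arXiv:1905.11489 — 8 statements merged into one kernel-verified Lean document; each statement's English description precedes it below -/
import Mathlib

section
/- For k, m ≥ 2 and n = km, two elements α, β of POI_{k×m} are J-related if and only if |Im(α)| = |Im(β)|; moreover J_α ≤_J J_β if and only if |Im(α)| ≤ |Im(β)|. -/
noncomputable section

namespace POIPaper

instance pequivMonoid (α : Type*) : Monoid (α ≃. α) where
  one := PEquiv.refl α
  mul f g := f.trans g
  mul_assoc := PEquiv.trans_assoc
  one_mul := PEquiv.refl_trans
  mul_one := PEquiv.trans_refl

/-- `f` is `P`-stable for the ordered partition of `Ω` given by the block-index map `ι`. -/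
def PStable {Ω : Type*} {k : ℕ} (ι : Ω → Fin k) (f : Ω ≃. Ω) : Prop :=
  ∀ x y : Ω, y ∈ f x →
    (∀ z, ι z = ι x → (f z).isSome) ∧
    (∀ z w, w ∈ f z → ι z = ι x → ι w = ι y) ∧
    (∀ w, ι w = ι y → ∃ z, ι z = ι x ∧ w ∈ f z)

/-- `f` is `P`-order preserving for the ordered partition given by `ι`. -/
def POrdPres {Ω : Type*} {k : ℕ} (ι : Ω → Fin k) (f : Ω ≃. Ω) : Prop :=
  ∀ x y x' y' : Ω, x' ∈ f x → y' ∈ f y → ι x ≤ ι y → ι x' ≤ ι y'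

/-- The set `POI(Ω,P)` of all `P`-stable and `P`-order preserving partial permutations. -/
def POISet {Ω : Type*} {k : ℕ} (ι : Ω → Fin k) : Set (Ω ≃. Ω) :=
  {f | PStable ι f ∧ POrdPres ι f}

/-- Block index map of the uniform interval partition of `{1,...,km}` into `k` blocks of size `m`. -/
def blk (k m : ℕ) (a : Fin (k * m)) : Fin k :=
  ⟨(a : ℕ) / m, by
    have ha := a.isLt
    rcases Nat.eq_zero_or_pos m with h | h
    · subst h; simp at ha
    · rw [Nat.div_lt_iff_lt_mul h]; omega⟩

/-- The monoid `POI_{k×m}` (as a subset of the monoid of partial permutations). -/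
def POIkm (k m : ℕ) : Set (Fin (k * m) ≃. Fin (k * m)) := POISet (blk k m)

/-- The cardinality of the image of a partial permutation. -/
def imCard {n : ℕ} (f : Fin n ≃. Fin n) : ℕ := Set.ncard {b | (f.symm b).isSome}

/-- The `J`-preorder of the monoid `POI_{k×m}`: `α ≤_J β` iff `α ∈ M β M`. -/
def leJ (k m : ℕ) (α β : Fin (k * m) ≃. Fin (k * m)) : Prop :=
  ∃ s ∈ POIkm k m, ∃ t ∈ POIkm k m, α = s * β * t

/-- Order preserving partial permutations of a chain. -/
def OrdPres {n : ℕ} (f : Fin n ≃. Fin n) : Prop :=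
  ∀ x y x' y' : Fin n, x' ∈ f x → y' ∈ f y → x ≤ y → x' ≤ y'

/-- The group of units of `POI_{k×m}`: elements with full domain and image. -/
def unitsSet (k m : ℕ) : Set (Fin (k * m) ≃. Fin (k * m)) :=
  {f | f ∈ POIkm k m ∧ (∀ a, (f a).isSome) ∧ (∀ b, (f.symm b).isSome)}

/- ===================== auxiliary development ===================== -/

attribute [local instance] Classical.propDecidable

section Closure

variable {Ω : Type*} {K : ℕ} {ι : Ω → Fin K}

lemma pstable_symm {f : Ω ≃. Ω} (hf : PStable ι f) : PStable ι f.symm := by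
  intro x y hxy
  have hx : x ∈ f y := (PEquiv.mem_iff_mem f).mp hxy
  obtain ⟨H1, H2, H3⟩ := hf y x hx
  refine ⟨?_, ?_, ?_⟩
  · intro z hz
    obtain ⟨w, hwι, hwz⟩ := H3 z hz
    have : w ∈ f.symm z := (PEquiv.mem_iff_mem f).mpr hwz
    rw [this]; rfl
  · intro z w hw hz
    obtain ⟨w', hw'ι, hw'z⟩ := H3 z hz
    have h1 : w' ∈ f.symm z := (PEquiv.mem_iff_mem f).mpr hw'z
    have : w = w' := by
      rw [Option.mem_def] at hw h1; rw [hw] at h1; exact Option.some_injective _ h1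
    rw [this]; exact hw'ι
  · intro w hw
    have hs := H1 w hw
    refine ⟨(f w).get hs, ?_, ?_⟩
    · exact H2 w _ (Option.get_mem hs) hw
    · exact (PEquiv.mem_iff_mem f).mpr (Option.get_mem hs)

lemma pordpres_symm {f : Ω ≃. Ω} (hf : PStable ι f) (ho : POrdPres ι f) :
    POrdPres ι f.symm := by
  intro x y x' y' hx hy hxy
  have hfx : x ∈ f x' := (PEquiv.mem_iff_mem f).mp hx
  have hfy : y ∈ f y' := (PEquiv.mem_iff_mem f).mp hy
  by_contra hcon
  have hyx : ι y' ≤ ι x' := le_of_not_ge hcon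
  have : ι y ≤ ι x := ho y' x' y x hfy hfx hyx
  have heq : ι x = ι y := le_antisymm hxy this
  obtain ⟨z, hzι, hz⟩ := (hf y' y hfy).2.2 x heq
  have h1 : x' ∈ f.symm x := hx
  have h2 : z ∈ f.symm x := (PEquiv.mem_iff_mem f).mpr hz
  have : x' = z := by
    rw [Option.mem_def] at h1 h2; rw [h1] at h2; exact Option.some_injective _ h2
  exact hcon (le_of_eq (this ▸ hzι ▸ rfl : ι x' = ι y'))

lemma pstable_trans {f g : Ω ≃. Ω} (hf : PStable ι f) (hg : PStable ι g) :
    PStable ι (f.trans g) := by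
  intro x y hxy
  obtain ⟨u, hu, hy⟩ := (PEquiv.mem_trans f g x y).mp hxy
  obtain ⟨F1, F2, F3⟩ := hf x u hu
  obtain ⟨G1, G2, G3⟩ := hg u y hy
  refine ⟨?_, ?_, ?_⟩
  · intro z hz
    have hfz := F1 z hz
    obtain ⟨w, hw⟩ := Option.isSome_iff_exists.mp hfz
    have hwι := F2 z w hw hz
    have hgz := G1 w hwι
    show ((f z).bind g).isSome
    rw [hw]; simpa using hgz
  · intro z w hw hz
    obtain ⟨v, hv, hw'⟩ := (PEquiv.mem_trans f g z w).mp hw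
    have hvι := F2 z v hv hz
    exact G2 v w hw' hvι
  · intro w hw
    obtain ⟨v, hvι, hv⟩ := G3 w hw
    obtain ⟨z, hzι, hz⟩ := F3 v hvι
    exact ⟨z, hzι, (PEquiv.mem_trans f g z w).mpr ⟨v, hz, hv⟩⟩

lemma pordpres_trans {f g : Ω ≃. Ω} (hof : POrdPres ι f) (hog : POrdPres ι g) :
    POrdPres ι (f.trans g) := by
  intro x y x' y' hx hy hxy
  obtain ⟨u, hu, hx'⟩ := (PEquiv.mem_trans f g x x').mp hx
  obtain ⟨v, hv, hy'⟩ := (PEquiv.mem_trans f g y y').mp hy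
  exact hog u v x' y' hx' hy' (hof x y u v hu hv hxy)

lemma poiset_symm {f : Ω ≃. Ω} (hf : f ∈ POISet ι) : f.symm ∈ POISet ι :=
  ⟨pstable_symm hf.1, pordpres_symm hf.1 hf.2⟩

lemma poiset_trans {f g : Ω ≃. Ω} (hf : f ∈ POISet ι) (hg : g ∈ POISet ι) :
    f.trans g ∈ POISet ι :=
  ⟨pstable_trans hf.1 hg.1, pordpres_trans hf.2 hg.2⟩

end Closure

section Blocks

variable {k m : ℕ}

/-- Encoding of (block, position) as an element of `Fin (k*m)`. -/
def enc (hm : 0 < m) (i : Fin k) (p : Fin m) : Fin (k * m) :=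
  ⟨i * m + p, by
    have h1 := i.isLt
    have h2 := p.isLt
    calc (i : ℕ) * m + p < i * m + m := by omega
    _ = (i + 1) * m := by ring
    _ ≤ k * m := Nat.mul_le_mul_right m h1⟩

/-- Position of an element inside its block. -/
def pos (hm : 0 < m) (x : Fin (k * m)) : Fin m :=
  ⟨(x : ℕ) % m, Nat.mod_lt _ hm⟩

lemma blk_enc (hm : 0 < m) (i : Fin k) (p : Fin m) : blk k m (enc hm i p) = i := by
  have hp := p.isLt
  apply Fin.ext
  show ((i : ℕ) * m + p) / m = i
  rw [Nat.mul_comm, Nat.mul_add_div hm, Nat.div_eq_of_lt hp]; omega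

lemma pos_enc (hm : 0 < m) (i : Fin k) (p : Fin m) : pos hm (enc hm i p) = p := by
  have hp := p.isLt
  apply Fin.ext
  show ((i : ℕ) * m + p) % m = p
  rw [Nat.mul_comm, Nat.mul_add_mod]
  exact Nat.mod_eq_of_lt hp

lemma enc_blk_pos (hm : 0 < m) (x : Fin (k * m)) : enc hm (blk k m x) (pos hm x) = x := by
  apply Fin.ext
  show ((x : ℕ) / m) * m + x % m = x
  rw [Nat.mul_comm]
  exact Nat.div_add_mod (x : ℕ) m

lemma eq_of_blk_pos (hm : 0 < m) {x y : Fin (k * m)}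
    (h1 : blk k m x = blk k m y) (h2 : pos hm x = pos hm y) : x = y := by
  rw [← enc_blk_pos hm x, ← enc_blk_pos hm y, h1, h2]

/-- The set of blocks contained in the domain of `f`. -/
def domBlocks (hm : 0 < m) (f : Fin (k * m) ≃. Fin (k * m)) : Finset (Fin k) :=
  Finset.univ.filter fun i => (f (enc hm i ⟨0, hm⟩)).isSome

lemma dom_char (hm : 0 < m) {f : Fin (k * m) ≃. Fin (k * m)} (hf : f ∈ POIkm k m)
    (x : Fin (k * m)) : (f x).isSome ↔ blk k m x ∈ domBlocks hm f := by
  constructor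
  · intro hx
    have hmem : (f x).get hx ∈ f x := Option.get_mem hx
    have H1 := (hf.1 x _ hmem).1
    have := H1 (enc hm (blk k m x) ⟨0, hm⟩) (by rw [blk_enc])
    simp only [domBlocks, Finset.mem_filter, Finset.mem_univ, true_and]
    exact this
  · intro hx
    simp only [domBlocks, Finset.mem_filter, Finset.mem_univ, true_and] at hx
    have hmem : (f (enc hm (blk k m x) ⟨0, hm⟩)).get hx ∈ f (enc hm (blk k m x) ⟨0, hm⟩) :=
      Option.get_mem hx
    exact (hf.1 _ _ hmem).1 x (by rw [blk_enc])

end Blocks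

section Inflate

variable {k m : ℕ}

/-- Lift a block-level partial permutation to `Fin (k*m)`, acting as the identity on
positions inside blocks. -/
def inflate (hm : 0 < m) (g : Fin k ≃. Fin k) : Fin (k * m) ≃. Fin (k * m) where
  toFun x := (g (blk k m x)).map fun j => enc hm j (pos hm x)
  invFun y := (g.symm (blk k m y)).map fun j => enc hm j (pos hm y)
  inv x y := by
    simp only [Option.mem_def, Option.map_eq_some_iff]
    constructor
    · rintro ⟨j, hj, rfl⟩
      refine ⟨blk k m y, ?_, ?_⟩
      · rw [blk_enc]
        exact (PEquiv.mem_iff_mem g).mp hj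
      · rw [pos_enc, enc_blk_pos]
    · rintro ⟨j, hj, rfl⟩
      refine ⟨blk k m x, ?_, ?_⟩
      · rw [blk_enc]
        exact (PEquiv.mem_iff_mem g).mpr hj
      · rw [pos_enc, enc_blk_pos]

lemma mem_inflate (hm : 0 < m) (g : Fin k ≃. Fin k) (x y : Fin (k * m)) :
    y ∈ inflate hm g x ↔ blk k m y ∈ g (blk k m x) ∧ pos hm y = pos hm x := by
  show y ∈ (g (blk k m x)).map (fun j => enc hm j (pos hm x)) ↔ _
  simp only [Option.mem_def, Option.map_eq_some_iff]
  constructor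
  · rintro ⟨j, hj, rfl⟩
    rw [blk_enc, pos_enc]; exact ⟨hj, rfl⟩
  · rintro ⟨hj, hp⟩
    exact ⟨blk k m y, hj, by rw [← hp, enc_blk_pos]⟩

lemma isSome_inflate (hm : 0 < m) (g : Fin k ≃. Fin k) (x : Fin (k * m)) :
    (inflate hm g x).isSome = (g (blk k m x)).isSome := by
  show ((g (blk k m x)).map fun j => enc hm j (pos hm x)).isSome = _
  cases g (blk k m x) <;> rfl

lemma inflate_pstable (hm : 0 < m) (g : Fin k ≃. Fin k) :
    PStable (blk k m) (inflate hm g) := by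
  intro x y hxy
  rw [mem_inflate] at hxy
  obtain ⟨hby, hpy⟩ := hxy
  refine ⟨?_, ?_, ?_⟩
  · intro z hz
    rw [isSome_inflate, hz]
    rw [Option.mem_def] at hby
    rw [hby]; rfl
  · intro z w hw hz
    rw [mem_inflate] at hw
    obtain ⟨hbw, _⟩ := hw
    rw [hz] at hbw
    rw [Option.mem_def] at hbw hby
    rw [hby] at hbw
    exact (Option.some_injective _ hbw).symm
  · intro w hw
    refine ⟨enc hm (blk k m x) (pos hm w), by rw [blk_enc], ?_⟩
    rw [mem_inflate, blk_enc, pos_enc, hw]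
    exact ⟨hby, rfl⟩

lemma inflate_pordpres (hm : 0 < m) (g : Fin k ≃. Fin k)
    (hg : ∀ i j i' j' : Fin k, i' ∈ g i → j' ∈ g j → i ≤ j → i' ≤ j') :
    POrdPres (blk k m) (inflate hm g) := by
  intro x y x' y' hx hy hxy
  rw [mem_inflate] at hx hy
  exact hg _ _ _ _ hx.1 hy.1 hxy

lemma inflate_mem_POIkm (hm : 0 < m) (g : Fin k ≃. Fin k)
    (hg : ∀ i j i' j' : Fin k, i' ∈ g i → j' ∈ g j → i ≤ j → i' ≤ j') :
    inflate hm g ∈ POIkm k m :=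
  ⟨inflate_pstable hm g, inflate_pordpres hm g hg⟩

end Inflate

section PairPE

variable {a K : ℕ}

/-- The partial permutation sending `u p` to `v p` for each `p`. -/
def pairPE (u v : Fin a → Fin K) (hu : Function.Injective u) (hv : Function.Injective v) :
    Fin K ≃. Fin K where
  toFun i := if h : ∃ p, u p = i then some (v (Classical.choose h)) else none
  invFun j := if h : ∃ p, v p = j then some (u (Classical.choose h)) else none
  inv i j := by
    constructor
    · intro h
      split_ifs at h with h1
      · have hspec := Classical.choose_spec h1
        have hi : i = u (Classical.choose h1) := (Option.some_injective _ h).symm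
        have h2 : ∃ p, u p = i := ⟨Classical.choose h1, hi.symm⟩
        rw [dif_pos h2]
        have := Classical.choose_spec h2
        have hpq : Classical.choose h2 = Classical.choose h1 := hu (by rw [this, hi])
        rw [hpq, hspec]
    · intro h
      split_ifs at h with h1
      · have hspec := Classical.choose_spec h1
        have hj : j = v (Classical.choose h1) := (Option.some_injective _ h).symm
        have h2 : ∃ p, v p = j := ⟨Classical.choose h1, hj.symm⟩
        rw [dif_pos h2]
        have := Classical.choose_spec h2
        have hpq : Classical.choose h2 = Classical.choose h1 := hv (by rw [this, hj])
        rw [hpq, hspec]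

lemma mem_pairPE {u v : Fin a → Fin K} {hu : Function.Injective u} {hv : Function.Injective v}
    {i j : Fin K} : j ∈ pairPE u v hu hv i ↔ ∃ p, u p = i ∧ v p = j := by
  show j ∈ (if h : ∃ p, u p = i then some (v (Classical.choose h)) else none) ↔ _
  split_ifs with h1
  · simp only [Option.mem_def, Option.some_inj]
    constructor
    · intro hj
      exact ⟨Classical.choose h1, Classical.choose_spec h1, hj⟩
    · rintro ⟨p, hp, rfl⟩
      have : Classical.choose h1 = p := hu (by rw [Classical.choose_spec h1, hp])
      rw [this]
  · simp only [Option.mem_def, reduceCtorEq, false_iff]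
    rintro ⟨p, hp, rfl⟩
    exact h1 ⟨p, hp⟩

lemma isSome_pairPE {u v : Fin a → Fin K} {hu : Function.Injective u} {hv : Function.Injective v}
    {i : Fin K} : (pairPE u v hu hv i).isSome ↔ ∃ p, u p = i := by
  show (if h : ∃ p, u p = i then some (v (Classical.choose h)) else none).isSome ↔ _
  split_ifs with h1 <;> simp [h1]

end PairPE

section Counting

variable {k m : ℕ}

lemma domCard_eq_imCard {n : ℕ} (f : Fin n ≃. Fin n) :
    Set.ncard {x | (f x).isSome} = imCard f := by
  classical
  set F : Fin n → Fin n := fun x => (f x).getD x with hF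
  have himg : F '' {x | (f x).isSome} = {b | (f.symm b).isSome} := by
    ext b
    constructor
    · rintro ⟨x, hx, rfl⟩
      obtain ⟨w, hw⟩ := Option.isSome_iff_exists.mp hx
      have hFx : F x = w := by rw [hF]; simp [hw]
      have : x ∈ f.symm w := (PEquiv.mem_iff_mem f).mpr hw
      show (f.symm (F x)).isSome
      rw [hFx, this]; rfl
    · intro hb
      obtain ⟨x, hx⟩ := Option.isSome_iff_exists.mp hb
      have hbx : b ∈ f x := (PEquiv.mem_iff_mem f).mp hx
      refine ⟨x, ?_, ?_⟩
      · show (f x).isSome; rw [hbx]; rfl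
      · rw [hF]; simp [Option.mem_def.mp hbx]
  have hinj : Set.InjOn F {x | (f x).isSome} := by
    intro x hx x' hx' hFe
    obtain ⟨w, hw⟩ := Option.isSome_iff_exists.mp hx
    obtain ⟨w', hw'⟩ := Option.isSome_iff_exists.mp hx'
    have h1 : F x = w := by rw [hF]; simp [hw]
    have h2 : F x' = w' := by rw [hF]; simp [hw']
    have hww : w = w' := by rw [← h1, ← h2, hFe]
    have m1 : x ∈ f.symm w := (PEquiv.mem_iff_mem f).mpr hw
    have m2 : x' ∈ f.symm w := (PEquiv.mem_iff_mem f).mpr (hww ▸ hw')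
    rw [Option.mem_def] at m1 m2
    rw [m1] at m2
    exact Option.some_injective _ m2
  rw [imCard, ← himg, Set.ncard_image_of_injOn hinj]

lemma block_count (hm : 0 < m) (S : Finset (Fin k)) :
    Set.ncard {x : Fin (k * m) | blk k m x ∈ S} = m * S.card := by
  classical
  have hset : {x : Fin (k * m) | blk k m x ∈ S} =
      ↑(Finset.univ.filter fun x : Fin (k * m) => blk k m x ∈ S) := by
    ext x; simp
  rw [hset, Set.ncard_coe_finset]
  have hsplit : (Finset.univ.filter fun x : Fin (k * m) => blk k m x ∈ S) =
      S.biUnion fun i => Finset.univ.filter fun x : Fin (k * m) => blk k m x = i := by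
    ext x
    simp [Finset.mem_biUnion]
  rw [hsplit, Finset.card_biUnion]
  · have hfib : ∀ i : Fin k,
        (Finset.univ.filter fun x : Fin (k * m) => blk k m x = i).card = m := by
      intro i
      have : (Finset.univ.filter fun x : Fin (k * m) => blk k m x = i).card =
          (Finset.univ : Finset (Fin m)).card := by
        apply Finset.card_nbij' (fun x => pos hm x) (fun p => enc hm i p)
        · intro x _; exact Finset.mem_univ _
        · intro p _
          simp only [Finset.mem_coe, Finset.mem_filter, Finset.mem_univ, true_and]
          exact blk_enc hm i p
        · intro x hx
          have hbx := (Finset.mem_filter.mp hx).2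
          rw [← hbx]
          exact enc_blk_pos hm x
        · intro p _
          exact pos_enc hm i p
      rw [this, Finset.card_univ, Fintype.card_fin]
    calc (∑ i ∈ S, (Finset.univ.filter fun x : Fin (k * m) => blk k m x = i).card)
        = ∑ _i ∈ S, m := Finset.sum_congr rfl fun i _ => hfib i
      _ = S.card * m := by rw [Finset.sum_const, smul_eq_mul]
      _ = m * S.card := Nat.mul_comm _ _
  · intro i _ j _ hij
    rw [Function.onFun, Finset.disjoint_left]
    intro x hx hx'
    simp only [Finset.mem_filter] at hx hx'
    exact hij (hx.2 ▸ hx'.2 ▸ rfl)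

lemma imCard_eq (hm : 0 < m) {f : Fin (k * m) ≃. Fin (k * m)} (hf : f ∈ POIkm k m) :
    imCard f = m * (domBlocks hm f).card := by
  rw [← domCard_eq_imCard]
  have : {x | (f x).isSome} = {x : Fin (k * m) | blk k m x ∈ domBlocks hm f} := by
    ext x; exact dom_char hm hf x
  rw [this, block_count hm]

lemma imCard_trans_le_right {n : ℕ} (f g : Fin n ≃. Fin n) :
    imCard (f.trans g) ≤ imCard g := by
  apply Set.ncard_le_ncard _ (Set.toFinite _)
  intro b hb
  have hb' : (((f.trans g).symm) b).isSome := hb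
  rw [PEquiv.symm_trans_rev] at hb'
  have : ((g.symm b).bind f.symm).isSome := hb'
  show (g.symm b).isSome
  cases h : g.symm b
  · rw [h] at this; simp at this
  · rfl

lemma imCard_trans_le_left {n : ℕ} (f g : Fin n ≃. Fin n) :
    imCard (f.trans g) ≤ imCard f := by
  rw [← domCard_eq_imCard, ← domCard_eq_imCard]
  apply Set.ncard_le_ncard _ (Set.toFinite _)
  intro x hx
  have : ((f x).bind g).isSome := hx
  show (f x).isSome
  cases h : f x
  · rw [h] at this; simp at this
  · rfl

end Counting

section Main

variable {k m : ℕ}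

lemma leJ_imp (hm : 0 < m) {α β : Fin (k * m) ≃. Fin (k * m)}
    (h : leJ k m α β) : imCard α ≤ imCard β := by
  obtain ⟨s, _, t, _, rfl⟩ := h
  show imCard ((s.trans β).trans t) ≤ imCard β
  calc imCard ((s.trans β).trans t) ≤ imCard (s.trans β) := imCard_trans_le_left _ _
    _ ≤ imCard β := imCard_trans_le_right _ _

lemma card_imp_leJ (hm : 0 < m) {α β : Fin (k * m) ≃. Fin (k * m)}
    (hα : α ∈ POIkm k m) (hβ : β ∈ POIkm k m)
    (h : (domBlocks hm α).card ≤ (domBlocks hm β).card) : leJ k m α β := by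
  classical
  set A := domBlocks hm α with hA
  set B := domBlocks hm β with hB
  set u : Fin A.card → Fin k := fun p => A.orderEmbOfFin rfl p with hu_def
  set v : Fin A.card → Fin k := fun p => B.orderEmbOfFin rfl (Fin.castLE h p) with hv_def
  have hu : Function.Injective u := (A.orderEmbOfFin rfl).injective
  have hv : Function.Injective v := fun p q hpq =>
    Fin.castLE_injective h ((B.orderEmbOfFin rfl).injective hpq)
  set g := pairPE u v hu hv with hg_def
  have hgmono : ∀ i j i' j' : Fin k, i' ∈ g i → j' ∈ g j → i ≤ j → i' ≤ j' := by
    intro i j i' j' hi hj hij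
    rw [hg_def, mem_pairPE] at hi hj
    obtain ⟨p, hpu, hpv⟩ := hi
    obtain ⟨q, hqu, hqv⟩ := hj
    have hpq : p ≤ q := by
      have : u p ≤ u q := by rw [hpu, hqu]; exact hij
      exact (A.orderEmbOfFin rfl).le_iff_le.mp this
    have : v p ≤ v q := by
      apply (B.orderEmbOfFin rfl).le_iff_le.mpr
      exact hpq
    rw [← hpv, ← hqv]
    exact this
  set s := inflate hm g with hs_def
  have hs : s ∈ POIkm k m := inflate_mem_POIkm hm g hgmono
  have hdoms : ∀ x, (s x).isSome ↔ blk k m x ∈ A := by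
    intro x
    rw [hs_def, isSome_inflate, hg_def]
    rw [show ((pairPE u v hu hv (blk k m x)).isSome = true) ↔
        (pairPE u v hu hv (blk k m x)).isSome from Iff.rfl]
    rw [isSome_pairPE]
    constructor
    · rintro ⟨p, hp⟩
      rw [← hp]
      exact A.orderEmbOfFin_mem rfl p
    · intro hx
      have : blk k m x ∈ Set.range (A.orderEmbOfFin rfl) := by
        rw [A.range_orderEmbOfFin rfl]
        exact hx
      obtain ⟨p, hp⟩ := this
      exact ⟨p, hp⟩
  have hims : ∀ x y, y ∈ s x → blk k m y ∈ B := by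
    intro x y hy
    rw [hs_def, mem_inflate] at hy
    have h1 := hy.1
    rw [hg_def, mem_pairPE] at h1
    obtain ⟨p, _, hpv⟩ := h1
    rw [← hpv]
    exact B.orderEmbOfFin_mem rfl _
  set t := ((s.trans β).symm).trans α with ht_def
  have ht : t ∈ POIkm k m := poiset_trans (poiset_symm (poiset_trans hs hβ)) hα
  refine ⟨s, hs, t, ht, ?_⟩
  have hsb : ∀ x, ((s.trans β) x).isSome ↔ (α x).isSome := by
    intro x
    constructor
    · intro hx
      have h1 : (s x).isSome := by
        have hbind : ((s x).bind β).isSome := hx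
        cases hsx : s x
        · rw [hsx] at hbind; simp at hbind
        · rfl
      rw [hdoms, hA, ← dom_char hm hα] at h1
      exact h1
    · intro hx
      have h1 : (s x).isSome := by
        rw [hdoms, hA, ← dom_char hm hα]
        exact hx
      obtain ⟨y, hy⟩ := Option.isSome_iff_exists.mp h1
      have h2 : (β y).isSome := by
        rw [dom_char hm hβ, ← hB]
        exact hims x y hy
      show ((s x).bind β).isSome
      rw [hy]
      simpa using h2
  show α = (s.trans β).trans t
  rw [ht_def, ← PEquiv.trans_assoc, PEquiv.self_trans_symm]
  apply PEquiv.ext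
  intro x
  show α x = ((PEquiv.ofSet _).trans α) x
  by_cases hx : (α x).isSome
  · have hxD : x ∈ {x | ((s.trans β) x).isSome} := (hsb x).mpr hx
    have : PEquiv.ofSet {x | ((s.trans β) x).isSome} x = some x :=
      PEquiv.ofSet_eq_some_self_iff.mpr hxD
    show α x = (PEquiv.ofSet _ x).bind α
    rw [this]
    rfl
  · have hxD : x ∉ {x | ((s.trans β) x).isSome} := fun hc => hx ((hsb x).mp hc)
    have h0 : PEquiv.ofSet {x | ((s.trans β) x).isSome} x = none := by
      have hrfl : PEquiv.ofSet {x | ((s.trans β) x).isSome} x =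
          if x ∈ {x | ((s.trans β) x).isSome} then some x else none := rfl
      rw [hrfl, if_neg hxD]
    show α x = (PEquiv.ofSet _ x).bind α
    rw [h0, Option.not_isSome_iff_eq_none.mp hx]
    rfl

end Main

/-- for `k, m ≥ 2`, two elements of `POI_{k×m}` are `J`-related iff their images
have the same cardinality; moreover `α ≤_J β` iff `|Im α| ≤ |Im β|`. -/
theorem stmt5 (k m : ℕ) (hk : 2 ≤ k) (hm : 2 ≤ m) :
    ∀ α ∈ POIkm k m, ∀ β ∈ POIkm k m,
      (leJ k m α β ↔ imCard α ≤ imCard β) ∧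
      ((leJ k m α β ∧ leJ k m β α) ↔ imCard α = imCard β) := by
  have hm0 : 0 < m := by omega
  intro α hα β hβ
  have key : ∀ γ δ, γ ∈ POIkm k m → δ ∈ POIkm k m →
      (leJ k m γ δ ↔ imCard γ ≤ imCard δ) := by
    intro γ δ hγ hδ
    constructor
    · exact leJ_imp hm0
    · intro hle
      apply card_imp_leJ hm0 hγ hδ
      rw [imCard_eq hm0 hγ, imCard_eq hm0 hδ] at hle
      exact Nat.le_of_mul_le_mul_left hle hm0
  refine ⟨key α β hα hβ, ?_, ?_⟩
  · rintro ⟨h1, h2⟩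
    exact le_antisymm ((key α β hα hβ).mp h1) ((key β α hβ hα).mp h2)
  · intro he
    exact ⟨(key α β hα hβ).mpr he.le, (key β α hβ hα).mpr he.ge⟩


end POIPaper
end
end

section
/- For k, m ≥ 2, the cardinality of the monoid POI_{k×m} equals the sum over t from 0 to k of binom(k,t)² · (m!)^t. -/
noncomputable section

namespace POIPaper

namespace Aux

variable {k m : ℕ}

def enc (b : Fin k) (i : Fin m) : Fin (k * m) :=
  ⟨b * m + i, by
    have hb := b.isLt; have hi := i.isLt
    calc b * m + (i : ℕ) < b * m + m := by omega
      _ = (b + 1) * m := by ring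
      _ ≤ k * m := Nat.mul_le_mul_right m hb⟩

def res (a : Fin (k * m)) : Fin m :=
  ⟨(a : ℕ) % m, Nat.mod_lt _ (by
    have ha := a.isLt
    exact Nat.pos_of_ne_zero fun h => by simp [h] at ha)⟩

@[simp] lemma blk_enc (b : Fin k) (i : Fin m) : blk k m (enc b i) = b := by
  apply Fin.ext
  show ((b : ℕ) * m + i) / m = b
  have hi := i.isLt
  rw [Nat.add_comm, Nat.add_mul_div_right _ _ (by omega : 0 < m), Nat.div_eq_of_lt hi]
  omega

@[simp] lemma res_enc (b : Fin k) (i : Fin m) : res (enc b i) = i := by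
  apply Fin.ext
  show ((b : ℕ) * m + i) % m = i
  have hi := i.isLt
  rw [Nat.add_comm, Nat.add_mul_mod_self_right, Nat.mod_eq_of_lt hi]

@[simp] lemma enc_blk_res (a : Fin (k * m)) : enc (blk k m a) (res a) = a := by
  apply Fin.ext
  show (a : ℕ) / m * m + a % m = a
  simpa [Nat.mul_comm] using Nat.div_add_mod (a : ℕ) m

def idx (S : Finset (Fin k)) {t : ℕ} (h : S.card = t) {b : Fin k} (hb : b ∈ S) : Fin t :=
  (S.orderIsoOfFin h).symm ⟨b, hb⟩

lemma emb_idx (S : Finset (Fin k)) {t : ℕ} (h : S.card = t) {b : Fin k} (hb : b ∈ S) :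
    S.orderEmbOfFin h (idx S h hb) = b := by
  rw [← Finset.coe_orderIsoOfFin_apply, idx, OrderIso.apply_symm_apply]

lemma idx_emb (S : Finset (Fin k)) {t : ℕ} (h : S.card = t) (j : Fin t)
    (hb : S.orderEmbOfFin h j ∈ S) : idx S h hb = j := by
  have : (S.orderIsoOfFin h) (idx S h hb) = (S.orderIsoOfFin h) j := by
    apply Subtype.ext
    rw [Finset.coe_orderIsoOfFin_apply, Finset.coe_orderIsoOfFin_apply, emb_idx]
  exact (S.orderIsoOfFin h).injective this

lemma idx_congr (S : Finset (Fin k)) {t : ℕ} (h : S.card = t) {b b' : Fin k}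
    (hb : b ∈ S) (hb' : b' ∈ S) (e : b = b') : idx S h hb = idx S h hb' := by
  subst e; rfl

section Mk

variable (D R : Finset (Fin k)) (hc : R.card = D.card) (g : Fin k → Equiv.Perm (Fin m))

/-- forward map -/
def mkF (a : Fin (k * m)) : Option (Fin (k * m)) :=
  if ha : blk k m a ∈ D then
    some (enc (R.orderEmbOfFin hc (idx D rfl ha)) (g (blk k m a) (res a))) else none

/-- backward map -/
def mkI (b : Fin (k * m)) : Option (Fin (k * m)) :=
  if hb : blk k m b ∈ R then
    some (enc (D.orderEmbOfFin rfl (idx R hc hb))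
      ((g (D.orderEmbOfFin rfl (idx R hc hb))).symm (res b))) else none

lemma mkF_mkI (b : Fin (k * m)) (hb : blk k m b ∈ R) :
    mkF D R hc g (enc (D.orderEmbOfFin rfl (idx R hc hb))
      ((g (D.orderEmbOfFin rfl (idx R hc hb))).symm (res b))) = some b := by
  set j := idx R hc hb with hj
  set a := enc (D.orderEmbOfFin rfl j) ((g (D.orderEmbOfFin rfl j)).symm (res b)) with hadef
  have hblk : blk k m a = D.orderEmbOfFin rfl j := by rw [hadef, blk_enc]
  have ha : blk k m a ∈ D := hblk ▸ Finset.orderEmbOfFin_mem D rfl j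
  rw [mkF, dif_pos ha]
  have hidx : idx D rfl ha = j := by
    rw [idx_congr D rfl ha (hblk ▸ ha) hblk]
    exact idx_emb D rfl j _
  rw [hidx]
  have hres : res a = (g (D.orderEmbOfFin rfl j)).symm (res b) := by rw [hadef, res_enc]
  rw [hblk, hres, Equiv.apply_symm_apply, hj, emb_idx]
  simp

lemma mkI_mkF (a : Fin (k * m)) (ha : blk k m a ∈ D) :
    mkI D R hc g (enc (R.orderEmbOfFin hc (idx D rfl ha)) (g (blk k m a) (res a)))
      = some a := by
  set j := idx D rfl ha with hj
  set b := enc (R.orderEmbOfFin hc j) (g (blk k m a) (res a)) with hbdef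
  have hblk : blk k m b = R.orderEmbOfFin hc j := by rw [hbdef, blk_enc]
  have hb : blk k m b ∈ R := hblk ▸ Finset.orderEmbOfFin_mem R hc j
  rw [mkI, dif_pos hb]
  have hidx : idx R hc hb = j := by
    rw [idx_congr R hc hb (hblk ▸ hb) hblk]
    exact idx_emb R hc j _
  rw [hidx]
  have hres : res b = g (blk k m a) (res a) := by rw [hbdef, res_enc]
  rw [hres, hj, emb_idx, Equiv.symm_apply_apply]
  simp

/-- The partial permutation determined by domain blocks `D`, range blocks `R`
and within-block permutations `g`. -/
def mk : Fin (k * m) ≃. Fin (k * m) where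
  toFun := mkF D R hc g
  invFun := mkI D R hc g
  inv a b := by
    constructor
    · intro h
      rw [mkI] at h
      split at h
      case isTrue hb =>
        have ha : a = _ := (Option.some_injective _ h.symm)
        rw [ha]
        exact mkF_mkI D R hc g b hb
      case isFalse => exact absurd h (by simp)
    · intro h
      rw [mkF] at h
      split at h
      case isTrue ha =>
        have hb : b = _ := (Option.some_injective _ h.symm)
        rw [hb]
        exact mkI_mkF D R hc g a ha
      case isFalse => exact absurd h (by simp)

end Mk
lemma mk_apply (D R : Finset (Fin k)) (hc : R.card = D.card) (g : Fin k → Equiv.Perm (Fin m))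
    (a : Fin (k * m)) : mk D R hc g a = mkF D R hc g a := rfl

lemma mk_symm_apply (D R : Finset (Fin k)) (hc : R.card = D.card)
    (g : Fin k → Equiv.Perm (Fin m)) (b : Fin (k * m)) :
    (mk D R hc g).symm b = mkI D R hc g b := rfl

lemma mk_spec {D R : Finset (Fin k)} {hc : R.card = D.card} {g : Fin k → Equiv.Perm (Fin m)}
    {x y : Fin (k * m)} (h : y ∈ mk D R hc g x) :
    ∃ ha : blk k m x ∈ D,
      y = enc (R.orderEmbOfFin hc (idx D rfl ha)) (g (blk k m x) (res x)) := by
  rw [Option.mem_def, mk_apply, mkF] at h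
  split at h
  case isTrue ha => exact ⟨ha, (Option.some_inj.mp h).symm⟩
  case isFalse => exact absurd h (by simp)

lemma mk_mem (D R : Finset (Fin k)) (hc : R.card = D.card) (g : Fin k → Equiv.Perm (Fin m)) :
    mk D R hc g ∈ POIkm k m := by
  constructor
  · -- PStable
    intro x y hy
    obtain ⟨hx, hyeq⟩ := mk_spec hy
    have hblky : blk k m y = R.orderEmbOfFin hc (idx D rfl hx) := by rw [hyeq, blk_enc]
    refine ⟨?_, ?_, ?_⟩
    · intro z hz
      show (mkF D R hc g z).isSome
      rw [mkF, dif_pos (show blk k m z ∈ D by rwa [hz])]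
      rfl
    · intro z w hw hz
      obtain ⟨hz', hweq⟩ := mk_spec hw
      rw [hweq, blk_enc, hblky]
      exact congrArg _ (idx_congr D rfl hz' hx hz)
    · intro w hwy
      set z := enc (blk k m x) ((g (blk k m x)).symm (res w)) with hzdef
      have hbz : blk k m z = blk k m x := blk_enc _ _
      have hz : blk k m z ∈ D := by rwa [hbz]
      refine ⟨z, hbz, ?_⟩
      rw [Option.mem_def, mk_apply, mkF, dif_pos hz]
      have h1 : idx D rfl hz = idx D rfl hx := idx_congr _ _ _ _ hbz
      have hres : res z = (g (blk k m x)).symm (res w) := res_enc _ _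
      rw [h1, hbz, hres, Equiv.apply_symm_apply, ← hblky, ← hwy, enc_blk_res]
  · -- POrdPres
    intro x y x' y' hx' hy' hxy
    obtain ⟨hx, hx'eq⟩ := mk_spec hx'
    obtain ⟨hy, hy'eq⟩ := mk_spec hy'
    show blk k m x' ≤ blk k m y'
    rw [hx'eq, hy'eq, blk_enc, blk_enc]
    have h1 : idx D rfl hx ≤ idx D rfl hy := by
      rw [← (D.orderEmbOfFin rfl).le_iff_le, emb_idx, emb_idx]
      exact hxy
    exact (R.orderEmbOfFin hc).monotone h1

lemma symm_mem {f : Fin (k * m) ≃. Fin (k * m)} (hf : f ∈ POIkm k m) :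
    f.symm ∈ POIkm k m := by
  obtain ⟨hs, ho⟩ := hf
  constructor
  · intro y x hx
    have hx' : y ∈ f x := f.mem_iff_mem.mp hx
    obtain ⟨h1, h2, h3⟩ := hs x y hx'
    refine ⟨?_, ?_, ?_⟩
    · intro w hw
      obtain ⟨z, _, hzw⟩ := h3 w hw
      rw [Option.isSome_iff_exists]
      exact ⟨z, f.mem_iff_mem.mpr hzw⟩
    · intro w z hzw hw
      have hwz : w ∈ f z := f.mem_iff_mem.mp hzw
      obtain ⟨z', hz', hz'w⟩ := h3 w hw
      exact (f.inj hwz hz'w) ▸ hz'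
    · intro z hz
      obtain ⟨w, hw⟩ := Option.isSome_iff_exists.mp (h1 z hz)
      exact ⟨w, h2 z w hw hz, f.mem_iff_mem.mpr hw⟩
  · intro x y x' y' hx' hy' hxy
    have h1 : x ∈ f x' := f.mem_iff_mem.mp hx'
    have h2 : y ∈ f y' := f.mem_iff_mem.mp hy'
    by_cases h : blk k m x' ≤ blk k m y'
    · exact h
    · have h3 : blk k m y' ≤ blk k m x' := le_of_not_ge h
      have h4 : blk k m y ≤ blk k m x := ho y' x' y x h2 h1 h3
      have h5 : blk k m y = blk k m x := le_antisymm h4 (hxy.trans_eq rfl)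
      obtain ⟨_, _, hst3⟩ := hs x' x h1
      obtain ⟨z, hz, hzy⟩ := hst3 y h5
      have hyz : y' = z := f.inj h2 hzy
      rw [← hyz] at hz
      exact hz.ge

section StructureT

variable (hm : 0 < m) (f : Fin (k * m) ≃. Fin (k * m))

def z0 (hm : 0 < m) : Fin m := ⟨0, hm⟩

def Dof : Finset (Fin k) := Finset.univ.filter fun b => (f (enc b (z0 hm))).isSome

def Rof : Finset (Fin k) := Finset.univ.filter fun b => (f.symm (enc b (z0 hm))).isSome

lemma mem_Dof_iff (b : Fin k) : b ∈ Dof hm f ↔ (f (enc b (z0 hm))).isSome := by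
  simp [Dof]

lemma Rof_eq_Dof_symm : Rof hm f = Dof hm f.symm := rfl

lemma isSome_iff_mem_Dof (hf : f ∈ POIkm k m) (a : Fin (k * m)) :
    (f a).isSome ↔ blk k m a ∈ Dof hm f := by
  rw [mem_Dof_iff]
  constructor
  · intro h
    obtain ⟨y, hy⟩ := Option.isSome_iff_exists.mp h
    obtain ⟨h1, _, _⟩ := hf.1 a y hy
    exact h1 _ (blk_enc _ _)
  · intro h
    obtain ⟨y, hy⟩ := Option.isSome_iff_exists.mp h
    obtain ⟨h1, _, _⟩ := hf.1 _ y hy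
    exact h1 a (blk_enc _ _).symm

lemma isSome_symm_iff_mem_Rof (hf : f ∈ POIkm k m) (b : Fin (k * m)) :
    (f.symm b).isSome ↔ blk k m b ∈ Rof hm f :=
  isSome_iff_mem_Dof hm f.symm (symm_mem hf) b

lemma blk_image_eq (hf : f ∈ POIkm k m) {x y x' y' : Fin (k * m)} (hy : y ∈ f x) (hy' : y' ∈ f x')
    (hxx : blk k m x = blk k m x') : blk k m y = blk k m y' := by
  obtain ⟨_, h2, _⟩ := hf.1 x' y' hy'
  exact h2 x y hy hxx

/-- the image of the `i`-th point of block `b ∈ Dof`. -/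
def imgAt (hf : f ∈ POIkm k m) (b : Fin k) (hb : b ∈ Dof hm f) (i : Fin m) : Fin (k * m) :=
  (f (enc b i)).get ((isSome_iff_mem_Dof hm f hf _).mpr (by rwa [blk_enc]))

lemma imgAt_mem (hf : f ∈ POIkm k m) (b : Fin k) (hb : b ∈ Dof hm f) (i : Fin m) :
    imgAt hm f hf b hb i ∈ f (enc b i) := Option.get_mem _

end StructureT

section Structure2

variable (hm : 0 < m) (f : Fin (k * m) ≃. Fin (k * m)) (hf : f ∈ POIkm k m)

def sigOf : Fin (Dof hm f).card → Fin k := fun j =>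
  blk k m (imgAt hm f hf _ (Finset.orderEmbOfFin_mem (Dof hm f) rfl j) (z0 hm))

lemma blk_imgAt_eq_sig {x y : Fin (k * m)} (hy : y ∈ f x) (hx : blk k m x ∈ Dof hm f) :
    blk k m y = sigOf hm f hf (idx (Dof hm f) rfl hx) := by
  apply blk_image_eq f hf hy (imgAt_mem hm f hf _ _ _)
  rw [blk_enc, emb_idx]

lemma sigOf_mono : Monotone (sigOf hm f hf) := by
  intro j j' hjj
  refine hf.2 (enc ((Dof hm f).orderEmbOfFin rfl j) (z0 hm))
    (enc ((Dof hm f).orderEmbOfFin rfl j') (z0 hm)) _ _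
    (imgAt_mem hm f hf _ _ _) (imgAt_mem hm f hf _ _ _) ?_
  rw [blk_enc, blk_enc]
  exact ((Dof hm f).orderEmbOfFin rfl).monotone hjj

lemma sigOf_injective : Function.Injective (sigOf hm f hf) := by
  intro j j' h
  obtain ⟨_, _, h3⟩ := hf.1 (enc ((Dof hm f).orderEmbOfFin rfl j') (z0 hm))
    (imgAt hm f hf _ (Finset.orderEmbOfFin_mem (Dof hm f) rfl j') (z0 hm))
    (imgAt_mem hm f hf _ _ _)
  obtain ⟨z, hz, hzy⟩ := h3 (imgAt hm f hf _ (Finset.orderEmbOfFin_mem (Dof hm f) rfl j) (z0 hm)) h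
  have hez : enc ((Dof hm f).orderEmbOfFin rfl j) (z0 hm) = z :=
    f.inj (imgAt_mem hm f hf _ _ _) hzy
  rw [← hez, blk_enc, blk_enc] at hz
  exact ((Dof hm f).orderEmbOfFin rfl).injective hz

lemma sigOf_strictMono : StrictMono (sigOf hm f hf) :=
  (sigOf_mono hm f hf).strictMono_of_injective (sigOf_injective hm f hf)

lemma sigOf_mem_Rof (j : Fin (Dof hm f).card) : sigOf hm f hf j ∈ Rof hm f := by
  obtain ⟨h1, _, _⟩ := (symm_mem hf).1
    (imgAt hm f hf _ (Finset.orderEmbOfFin_mem (Dof hm f) rfl j) (z0 hm))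
    (enc ((Dof hm f).orderEmbOfFin rfl j) (z0 hm))
    (f.mem_iff_mem.mpr (imgAt_mem hm f hf _ _ _))
  have h2 := h1 (enc (sigOf hm f hf j) (z0 hm)) (by rw [blk_enc]; rfl)
  have h3 := (isSome_symm_iff_mem_Rof hm f hf _).mp h2
  rwa [blk_enc] at h3

lemma sigOf_surj {c : Fin k} (hc : c ∈ Rof hm f) : ∃ j, sigOf hm f hf j = c := by
  have hsome : (f.symm (enc c (z0 hm))).isSome := (mem_Dof_iff hm f.symm c).mp hc
  obtain ⟨z, hz⟩ := Option.isSome_iff_exists.mp hsome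
  have hz' : enc c (z0 hm) ∈ f z := f.mem_iff_mem.mp hz
  have hzD : blk k m z ∈ Dof hm f :=
    (isSome_iff_mem_Dof hm f hf z).mp (Option.isSome_iff_exists.mpr ⟨_, hz'⟩)
  refine ⟨idx (Dof hm f) rfl hzD, ?_⟩
  have h := blk_imgAt_eq_sig hm f hf hz' hzD
  rw [blk_enc] at h
  exact h.symm

include hf in
lemma Rof_card : (Rof hm f).card = (Dof hm f).card := by
  have h1 : Rof hm f = Finset.image (sigOf hm f hf) Finset.univ := by
    ext c
    simp only [Finset.mem_image, Finset.mem_univ, true_and]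
    constructor
    · intro hc; exact sigOf_surj hm f hf hc
    · rintro ⟨j, rfl⟩; exact sigOf_mem_Rof hm f hf j
  rw [h1, Finset.card_image_of_injective _ (sigOf_injective hm f hf), Finset.card_univ,
    Fintype.card_fin]

lemma sigOf_eq :
    sigOf hm f hf = fun j => (Rof hm f).orderEmbOfFin (Rof_card hm f hf) j :=
  Finset.orderEmbOfFin_unique _ (sigOf_mem_Rof hm f hf) (sigOf_strictMono hm f hf)

lemma imgAt_res_inj (b : Fin k) (hb : b ∈ Dof hm f) :
    Function.Injective (fun i => res (imgAt hm f hf b hb i)) := by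
  intro i i' hii
  simp only at hii
  have hbk : blk k m (imgAt hm f hf b hb i) = blk k m (imgAt hm f hf b hb i') :=
    blk_image_eq f hf (imgAt_mem hm f hf b hb i) (imgAt_mem hm f hf b hb i')
      (by rw [blk_enc, blk_enc])
  have himg : imgAt hm f hf b hb i = imgAt hm f hf b hb i' := by
    rw [← enc_blk_res (imgAt hm f hf b hb i), ← enc_blk_res (imgAt hm f hf b hb i'), hbk, hii]
  have hmem' : imgAt hm f hf b hb i ∈ f (enc b i') := by
    rw [himg]; exact imgAt_mem hm f hf b hb i'
  have henc : enc b i = enc b i' := f.inj (imgAt_mem hm f hf b hb i) hmem'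
  have h2 := congrArg res henc
  rwa [res_enc, res_enc] at h2

def gOf : Fin k → Equiv.Perm (Fin m) := fun b =>
  if hb : b ∈ Dof hm f then
    Equiv.ofBijective (fun i => res (imgAt hm f hf b hb i))
      (Finite.injective_iff_bijective.mp (imgAt_res_inj hm f hf b hb))
  else 1

lemma mk_of_eq : mk (Dof hm f) (Rof hm f) (Rof_card hm f hf) (gOf hm f hf) = f := by
  apply PEquiv.ext
  intro a
  by_cases ha : blk k m a ∈ Dof hm f
  · rw [mk_apply, mkF, dif_pos ha]
    have hsome : (f a).isSome := (isSome_iff_mem_Dof hm f hf a).mpr ha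
    obtain ⟨y, hy⟩ := Option.isSome_iff_exists.mp hsome
    rw [hy]
    have hg : gOf hm f hf (blk k m a) (res a) = res (imgAt hm f hf (blk k m a) ha (res a)) := by
      rw [gOf, dif_pos ha]; rfl
    have himg : imgAt hm f hf (blk k m a) ha (res a) = y := by
      have h1 : imgAt hm f hf (blk k m a) ha (res a) ∈ f (enc (blk k m a) (res a)) :=
        imgAt_mem hm f hf _ _ _
      rw [Option.mem_def, enc_blk_res] at h1
      exact Option.some_inj.mp (h1.symm.trans hy)
    have hemb : (Rof hm f).orderEmbOfFin (Rof_card hm f hf) (idx (Dof hm f) rfl ha)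
        = blk k m y := by
      rw [← congrFun (sigOf_eq hm f hf) (idx (Dof hm f) rfl ha)]
      exact (blk_imgAt_eq_sig hm f hf (show y ∈ f a from hy) ha).symm
    rw [hg, himg, hemb, enc_blk_res]
  · rw [mk_apply, mkF, dif_neg ha]
    symm
    rw [← Option.not_isSome_iff_eq_none, isSome_iff_mem_Dof hm f hf]
    exact ha

end Structure2

section RoundTrip

variable (hm : 0 < m) (D R : Finset (Fin k)) (hc : R.card = D.card)
  (g : Fin k → Equiv.Perm (Fin m))

lemma Dof_mk : Dof hm (mk D R hc g) = D := by
  ext b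
  rw [mem_Dof_iff]
  constructor
  · intro h
    rw [mk_apply, mkF] at h
    split at h
    case isTrue hb => rwa [blk_enc] at hb
    case isFalse => simp at h
  · intro hb
    rw [mk_apply, mkF, dif_pos (show blk k m (enc b (z0 hm)) ∈ D by rwa [blk_enc])]
    rfl

lemma Rof_mk : Rof hm (mk D R hc g) = R := by
  ext b
  rw [Rof_eq_Dof_symm, mem_Dof_iff]
  constructor
  · intro h
    rw [mk_symm_apply, mkI] at h
    split at h
    case isTrue hb => rwa [blk_enc] at hb
    case isFalse => simp at h
  · intro hb
    rw [mk_symm_apply, mkI, dif_pos (show blk k m (enc b (z0 hm)) ∈ R by rwa [blk_enc])]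
    rfl

lemma gOf_mk (hsupp : ∀ b ∉ D, g b = 1) :
    gOf hm (mk D R hc g) (mk_mem D R hc g) = g := by
  funext b
  by_cases hb : b ∈ D
  · have hb' : b ∈ Dof hm (mk D R hc g) := by rw [Dof_mk]; exact hb
    rw [gOf, dif_pos hb']
    apply Equiv.ext
    intro i
    show res (imgAt hm (mk D R hc g) (mk_mem D R hc g) b hb' i) = g b i
    have h1 : imgAt hm (mk D R hc g) (mk_mem D R hc g) b hb' i ∈ (mk D R hc g) (enc b i) :=
      imgAt_mem _ _ _ _ _ _
    rw [Option.mem_def, mk_apply, mkF,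
      dif_pos (show blk k m (enc b i) ∈ D by rw [blk_enc]; exact hb)] at h1
    have h2 := (Option.some_inj.mp h1).symm
    rw [h2, res_enc, blk_enc, res_enc]
  · have hb' : b ∉ Dof hm (mk D R hc g) := by rw [Dof_mk]; exact hb
    rw [gOf, dif_neg hb', hsupp b hb]

end RoundTrip

/-- data: domain blocks, range blocks, within-block permutations supported on the domain. -/
def PDat (k m : ℕ) :=
  {q : Finset (Fin k) × Finset (Fin k) × (Fin k → Equiv.Perm (Fin m)) //
    q.2.1.card = q.1.card ∧ ∀ b ∉ q.1, q.2.2 b = 1}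

def equivPOI (hm : 0 < m) :
    PDat k m ≃ {f : Fin (k * m) ≃. Fin (k * m) // f ∈ POIkm k m} where
  toFun q := ⟨mk q.1.1 q.1.2.1 q.2.1 q.1.2.2, mk_mem _ _ _ _⟩
  invFun F := ⟨(Dof hm F.1, Rof hm F.1, gOf hm F.1 F.2),
    Rof_card hm F.1 F.2, fun _ hb => dif_neg hb⟩
  left_inv q := by
    obtain ⟨⟨D, R, g⟩, hc, hsupp⟩ := q
    apply Subtype.ext
    exact Prod.ext (Dof_mk hm D R hc g)
      (Prod.ext (Rof_mk hm D R hc g) (gOf_mk hm D R hc g hsupp))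
  right_inv F := Subtype.ext (mk_of_eq hm F.1 F.2)

def SigT (k m : ℕ) :=
  Σ t : Fin (k + 1), ({s : Finset (Fin k) // s.card = (t : ℕ)} ×
    {s : Finset (Fin k) // s.card = (t : ℕ)} × (Fin (t : ℕ) → Equiv.Perm (Fin m)))

instance : Fintype (SigT k m) := by unfold SigT; infer_instance

def equivSig : PDat k m ≃ SigT k m where
  toFun q := ⟨⟨q.1.1.card,
      Nat.lt_succ_of_le (le_trans (Finset.card_le_univ _) (by simp))⟩,
    ⟨q.1.1, rfl⟩, ⟨q.1.2.1, q.2.1⟩, fun j => q.1.2.2 (q.1.1.orderEmbOfFin rfl j)⟩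
  invFun s := ⟨(s.2.1.1, s.2.2.1.1,
      fun b => if hb : b ∈ s.2.1.1 then s.2.2.2 (idx s.2.1.1 s.2.1.2 hb) else 1),
    s.2.2.1.2.trans s.2.1.2.symm, fun _ hb => dif_neg hb⟩
  left_inv q := by
    obtain ⟨⟨D, R, g⟩, hc, hsupp⟩ := q
    apply Subtype.ext
    refine Prod.ext rfl (Prod.ext rfl ?_)
    funext b
    by_cases hb : b ∈ D
    · simp only [dif_pos hb]
      rw [emb_idx]
    · simp only [dif_neg hb]
      exact (hsupp b hb).symm
  right_inv s := by
    obtain ⟨⟨tv, htv⟩, ⟨D, hD⟩, ⟨R, hR⟩, h⟩ := s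
    change D.card = tv at hD
    subst hD
    refine Sigma.ext rfl (heq_of_eq ?_)
    refine Prod.ext (Subtype.ext rfl) (Prod.ext (Subtype.ext rfl) ?_)
    funext j
    simp only [dif_pos (Finset.orderEmbOfFin_mem D rfl j)]
    exact congrArg h (idx_emb D _ j _)

lemma card_SigT : Nat.card (SigT k m) =
    ∑ t ∈ Finset.range (k + 1), (k.choose t) ^ 2 * (Nat.factorial m) ^ t := by
  have e : SigT k m ≃ Σ t : Fin (k + 1), ({s : Finset (Fin k) // s.card = (t : ℕ)} ×
      ({s : Finset (Fin k) // s.card = (t : ℕ)} × (Fin (t : ℕ) → Equiv.Perm (Fin m)))) :=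
    Equiv.refl _
  rw [Nat.card_congr e, Nat.card_eq_fintype_card, Fintype.card_sigma]
  have h : ∀ t : Fin (k + 1),
      Fintype.card ({s : Finset (Fin k) // s.card = (t : ℕ)} ×
        ({s : Finset (Fin k) // s.card = (t : ℕ)} × (Fin (t : ℕ) → Equiv.Perm (Fin m))))
      = (k.choose (t : ℕ)) ^ 2 * (Nat.factorial m) ^ (t : ℕ) := by
    intro t
    rw [Fintype.card_prod, Fintype.card_prod, Fintype.card_finset_len, Fintype.card_fin,
      Fintype.card_fun, Fintype.card_perm, Fintype.card_fin, Fintype.card_fin]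
    ring
  rw [Finset.sum_congr rfl fun t _ => h t]
  exact Fin.sum_univ_eq_sum_range (fun t => (k.choose t) ^ 2 * (Nat.factorial m) ^ t) (k + 1)

end Aux

/-- for `k, m ≥ 2`, `|POI_{k×m}| = ∑_{t=0}^{k} C(k,t)² (m!)^t`. -/
theorem stmt7 (k m : ℕ) (hk : 2 ≤ k) (hm : 2 ≤ m) :
    Set.ncard (POIkm k m) =
      ∑ t ∈ Finset.range (k + 1), (k.choose t) ^ 2 * (Nat.factorial m) ^ t := by
  have hm0 : 0 < m := by omega
  rw [← Nat.card_coe_set_eq]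
  rw [Nat.card_congr ((Aux.equivPOI hm0).symm.trans Aux.equivSig)]
  exact Aux.card_SigT

end POIPaper
end
end

section
/- For k, m ≥ 2, the group of units of POI_{k×m} is isomorphic to the direct product of k copies of the symmetric group S_m. -/
noncomputable section

namespace POIPaper

def pe (k m : ℕ) : Fin k × Fin m ≃ Fin (k * m) where
  toFun p := ⟨(p.2 : ℕ) + m * (p.1 : ℕ), by
    have h1 := p.1.isLt; have h2 := p.2.isLt
    calc (p.2 : ℕ) + m * p.1 < m + m * p.1 := by omega
    _ = m * (p.1 + 1) := by ring
    _ ≤ m * k := Nat.mul_le_mul_left m h1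
    _ = k * m := Nat.mul_comm m k⟩
  invFun a := (⟨(a : ℕ) / m, (blk k m a).isLt⟩,
    ⟨(a : ℕ) % m, Nat.mod_lt _ (by
      have ha := a.isLt
      rcases Nat.eq_zero_or_pos m with h | h
      · subst h; simp at ha
      · exact h)⟩)
  left_inv := by
    rintro ⟨⟨i, hi⟩, ⟨j, hj⟩⟩
    have h1 : (j + m * i) / m = i := by
      rw [Nat.add_mul_div_left _ _ (by omega), Nat.div_eq_of_lt hj]
      omega
    have h2 : (j + m * i) % m = j := by
      rw [Nat.add_mul_mod_self_left, Nat.mod_eq_of_lt hj]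
    simp [h1, h2]
  right_inv := by
    intro a
    apply Fin.ext
    simp [Nat.mod_add_div]

lemma pe_symm_fst {k m : ℕ} (a : Fin (k * m)) : ((pe k m).symm a).1 = blk k m a := rfl

lemma blk_pe {k m : ℕ} (p : Fin k × Fin m) : blk k m (pe k m p) = p.1 := by
  rw [← pe_symm_fst, Equiv.symm_apply_apply]

lemma pe_blk_snd {k m : ℕ} (a : Fin (k * m)) :
    pe k m (blk k m a, ((pe k m).symm a).2) = a := by
  rw [← pe_symm_fst]; exact (pe k m).apply_symm_apply a


def blockPerm {k m : ℕ} (z : Fin k → Equiv.Perm (Fin m)) : Fin k × Fin m ≃ Fin k × Fin m where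
  toFun p := (p.1, (z p.1)⁻¹ p.2)
  invFun p := (p.1, z p.1 p.2)
  left_inv p := by simp
  right_inv p := by simp

def E (k m : ℕ) (z : Fin k → Equiv.Perm (Fin m)) : Fin (k * m) ≃ Fin (k * m) :=
  ((pe k m).symm.trans (blockPerm z)).trans (pe k m)

lemma E_apply {k m : ℕ} (z : Fin k → Equiv.Perm (Fin m)) (a : Fin (k * m)) :
    E k m z a = pe k m (blk k m a, (z (blk k m a))⁻¹ ((pe k m).symm a).2) := by
  simp [E, blockPerm, Equiv.trans_apply, pe_symm_fst]

lemma blk_E {k m : ℕ} (z : Fin k → Equiv.Perm (Fin m)) (a : Fin (k * m)) :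
    blk k m (E k m z a) = blk k m a := by
  rw [E_apply, blk_pe]

lemma E_mul {k m : ℕ} (z w : Fin k → Equiv.Perm (Fin m)) :
    E k m (z * w) = (E k m z).trans (E k m w) := by
  apply Equiv.ext
  intro a
  simp [E, blockPerm, Equiv.trans_apply, Pi.mul_apply, mul_inv_rev, Equiv.Perm.mul_apply]



/-- Any permutation preserving block indices gives a unit of `POI_{k×m}`. -/
lemma toPEquiv_mem_units {k m : ℕ} (g : Fin (k * m) ≃ Fin (k * m))
    (hg : ∀ a, blk k m (g a) = blk k m a) : g.toPEquiv ∈ unitsSet k m := by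
  have hmem : ∀ x y : Fin (k * m), y ∈ g.toPEquiv x ↔ y = g x := by
    intro x y; simp [Equiv.toPEquiv_apply, eq_comm]
  refine ⟨⟨?_, ?_⟩, ?_, ?_⟩
  · -- PStable
    intro x y hy
    rw [hmem] at hy; subst hy
    refine ⟨fun z _ => by simp [Equiv.toPEquiv_apply], ?_, ?_⟩
    · intro z w hw hz
      rw [hmem] at hw; subst hw
      rw [hg, hg, hz]
    · intro w hw
      refine ⟨g.symm w, ?_, ?_⟩
      · rw [← hg (g.symm w), g.apply_symm_apply, hw, hg]
      · rw [hmem, g.apply_symm_apply]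
  · -- POrdPres
    intro x y x' y' hx hy hle
    rw [hmem] at hx hy; subst hx; subst hy
    rwa [hg, hg]
  · intro a; simp [Equiv.toPEquiv_apply]
  · intro b; rw [← Equiv.toPEquiv_symm]; simp [Equiv.toPEquiv_apply]

/-- Any unit of `POI_{k×m}` comes from a block-preserving permutation. -/
lemma units_eq_toPEquiv {k m : ℕ} (hk : 0 < k) (hm : 0 < m)
    (f : Fin (k * m) ≃. Fin (k * m)) (hf : f ∈ unitsSet k m) :
    ∃ g : Fin (k * m) ≃ Fin (k * m), (∀ a, blk k m (g a) = blk k m a) ∧ f = g.toPEquiv := by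
  obtain ⟨⟨hst, hop⟩, hd, hi⟩ := hf
  set g : Fin (k * m) ≃ Fin (k * m) :=
    { toFun := fun a => (f a).get (hd a)
      invFun := fun b => (f.symm b).get (hi b)
      left_inv := by
        intro a
        have h1 : (f a).get (hd a) ∈ f a := Option.get_mem _
        have h2 : a ∈ f.symm ((f a).get (hd a)) := f.mem_iff_mem.2 h1
        exact Option.mem_unique (Option.get_mem _) h2
      right_inv := by
        intro b
        have h1 : (f.symm b).get (hi b) ∈ f.symm b := Option.get_mem _
        have h2 : b ∈ f ((f.symm b).get (hi b)) := f.mem_iff_mem.1 h1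
        exact Option.mem_unique (Option.get_mem _) h2 } with hgdef
  have hga : ∀ a, g a ∈ f a := fun a => Option.get_mem _
  have hfeq : f = g.toPEquiv := by
    ext a b
    simp only [Equiv.toPEquiv_apply]
    constructor
    · intro hb; rw [Option.mem_unique hb (hga a)]
    · intro hb
      have : b = g a := by simpa [eq_comm] using hb
      rw [this]; exact hga a
  -- block preservation
  set σ : Fin k → Fin k := fun i => blk k m (g (pe k m (i, ⟨0, hm⟩))) with hσdef
  have hσ : ∀ a, blk k m (g a) = σ (blk k m a) := by
    intro a
    set x := pe k m (blk k m a, ⟨0, hm⟩) with hx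
    have hbx : blk k m x = blk k m a := blk_pe _
    obtain ⟨-, h2, -⟩ := hst x (g x) (hga x)
    exact h2 a (g a) (hga a) hbx.symm
  have hmono : Monotone σ := by
    intro i i' hle
    have := hop (pe k m (i, ⟨0, hm⟩)) (pe k m (i', ⟨0, hm⟩)) _ _ (hga _) (hga _)
      (by rw [blk_pe, blk_pe]; exact hle)
    simpa [hσdef] using this
  have hsurj : Function.Surjective σ := by
    intro w
    refine ⟨blk k m (g.symm (pe k m (w, ⟨0, hm⟩))), ?_⟩
    rw [← hσ, g.apply_symm_apply, blk_pe]
  have hinj : Function.Injective σ := Finite.injective_iff_surjective.2 hsurj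
  have hsm : StrictMono σ := hmono.strictMono_of_injective hinj
  have hσid : σ = id := by
    apply (hsm.range_inj strictMono_id).1
    rw [Set.range_id, Set.range_eq_univ.2 hsurj]
  refine ⟨g, fun a => by rw [hσ, hσid, id], hfeq⟩


lemma pe_of_blk {k m : ℕ} {b : Fin (k * m)} {i : Fin k} (h : blk k m b = i) :
    pe k m (i, ((pe k m).symm b).2) = b := by
  rw [← h, pe_blk_snd]

/-- for `k, m ≥ 2`, the group of units of `POI_{k×m}` is isomorphic to the
direct product of `k` copies of the symmetric group `S_m`. -/
theorem stmt9 (k m : ℕ) (hk : 2 ≤ k) (hm : 2 ≤ m) :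
    ∃ φ : (Fin k → Equiv.Perm (Fin m)) → (Fin (k * m) ≃. Fin (k * m)),
      φ 1 = 1 ∧ (∀ z w, φ (z * w) = φ z * φ w) ∧
      Function.Injective φ ∧ Set.range φ = unitsSet k m := by
  have hk' : 0 < k := by omega
  have hm' : 0 < m := by omega
  refine ⟨fun z => (E k m z).toPEquiv, ?_, ?_, ?_, ?_⟩
  · -- φ 1 = 1
    have h1 : E k m 1 = Equiv.refl (Fin (k * m)) := by
      apply Equiv.ext
      intro a
      rw [E_apply]
      simp [pe_blk_snd]
    show (E k m 1).toPEquiv = 1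
    rw [h1, Equiv.toPEquiv_refl]
    rfl
  · -- multiplicativity
    intro z w
    show (E k m (z * w)).toPEquiv = _
    rw [E_mul, Equiv.toPEquiv_trans]
    rfl
  · -- injectivity
    intro z w h
    have hE : E k m z = E k m w := by
      apply Equiv.ext
      intro a
      have := congrArg (fun f : Fin (k*m) ≃. Fin (k*m) => f a) h
      simpa [Equiv.toPEquiv_apply] using this
    funext i
    apply inv_injective
    apply Equiv.ext
    intro j
    have := congrArg (fun e : Fin (k*m) ≃ Fin (k*m) => e (pe k m (i, j))) hE
    simp only [E_apply, blk_pe, Equiv.symm_apply_apply] at this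
    exact (Prod.ext_iff.1 ((pe k m).injective this)).2
  · -- range
    ext f
    constructor
    · rintro ⟨z, rfl⟩
      exact toPEquiv_mem_units (E k m z) (blk_E z)
    · intro hf
      obtain ⟨g, hg, rfl⟩ := units_eq_toPEquiv hk' hm' f hf
      set gB : Fin k → (Fin m ≃ Fin m) := fun i =>
        { toFun := fun j => ((pe k m).symm (g (pe k m (i, j)))).2
          invFun := fun j => ((pe k m).symm (g.symm (pe k m (i, j)))).2
          left_inv := by
            intro j
            have hb : blk k m (g (pe k m (i, j))) = i := by rw [hg, blk_pe]
            simp only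
            rw [pe_of_blk hb, g.symm_apply_apply, Equiv.symm_apply_apply]
          right_inv := by
            intro j
            have hb : blk k m (g.symm (pe k m (i, j))) = i := by
              rw [← hg (g.symm (pe k m (i, j))), g.apply_symm_apply, blk_pe]
            simp only
            rw [pe_of_blk hb, g.apply_symm_apply, Equiv.symm_apply_apply] } with hgB
      refine ⟨fun i => (gB i)⁻¹, ?_⟩
      have hE : E k m (fun i => (gB i)⁻¹) = g := by
        apply Equiv.ext
        intro a
        rw [E_apply]
        simp only [inv_inv]
        have h1 : pe k m (blk k m a, ((pe k m).symm a).2) = a := pe_blk_snd a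
        show pe k m (blk k m a, ((pe k m).symm (g (pe k m (blk k m a, ((pe k m).symm a).2)))).2) = g a
        rw [h1, ← hg a, pe_blk_snd]
      show (E k m fun i => (gB i)⁻¹).toPEquiv = g.toPEquiv
      rw [hE]


end POIPaper
end
end

section
/- The map ψ: POI_k → I_n defined by sending a partial order preserving injection θ of {1,...,k} to the partial permutation with domain ∪{I_i : i ∈ Dom(θ)} that maps I_i order-isomorphically onto I_{iθ}, is an injective monoid homomorphism whose image is POI_n ∩ POI_{k×m}. -/
noncomputable section

namespace POIPaper

section Aux

variable {k m : ℕ}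

lemma blk_coe (a : Fin (k * m)) : (blk k m a : ℕ) = (a : ℕ) / m := rfl

/-- The `r`-th element of block `j`. -/
def embB (hm : 0 < m) (j : Fin k) (r : ℕ) (hr : r < m) : Fin (k * m) :=
  ⟨(j : ℕ) * m + r, by
    have : ((j : ℕ) + 1) * m ≤ k * m := Nat.mul_le_mul_right m j.isLt
    nlinarith⟩

lemma embB_coe (hm : 0 < m) (j : Fin k) (r : ℕ) (hr : r < m) :
    (embB hm j r hr : ℕ) = (j : ℕ) * m + r := rfl

lemma blk_embB (hm : 0 < m) (j : Fin k) (r : ℕ) (hr : r < m) :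
    blk k m (embB hm j r hr) = j := by
  apply Fin.ext
  show ((j : ℕ) * m + r) / m = j
  rw [Nat.mul_comm, Nat.mul_add_div hm, Nat.div_eq_of_lt hr]
  omega

lemma embB_mod (hm : 0 < m) (j : Fin k) (r : ℕ) (hr : r < m) :
    (embB hm j r hr : ℕ) % m = r := by
  show ((j : ℕ) * m + r) % m = r
  rw [Nat.mul_comm, Nat.mul_add_mod, Nat.mod_eq_of_lt hr]

lemma eq_embB (hm : 0 < m) (b : Fin (k * m)) :
    b = embB hm (blk k m b) ((b : ℕ) % m) (Nat.mod_lt _ hm) := by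
  apply Fin.ext
  rw [embB_coe, blk_coe]
  rw [Nat.mul_comm ((b : ℕ)/m) m]
  exact (Nat.div_add_mod _ _).symm

lemma blk_mod_inj (hm : 0 < m) {a b : Fin (k * m)} (h1 : blk k m b = blk k m a)
    (h2 : (b : ℕ) % m = (a : ℕ) % m) : b = a := by
  calc b = embB hm (blk k m b) ((b : ℕ) % m) (Nat.mod_lt _ hm) := eq_embB hm b
    _ = embB hm (blk k m a) ((a : ℕ) % m) (Nat.mod_lt _ hm) := by
        apply Fin.ext; rw [embB_coe, embB_coe, h1, h2]
    _ = a := (eq_embB hm a).symm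

lemma mem_map_embB (hm : 0 < m) (o : Option (Fin k)) (r : ℕ) (hr : r < m) (y : Fin (k * m)) :
    (y ∈ o.map fun j => embB hm j r hr) ↔ blk k m y ∈ o ∧ (y : ℕ) % m = r := by
  simp only [Option.mem_map]
  constructor
  · rintro ⟨j, hj, rfl⟩
    exact ⟨by rwa [blk_embB], embB_mod hm j r hr⟩
  · rintro ⟨hb, hmod⟩
    refine ⟨blk k m y, hb, ?_⟩
    subst hmod
    exact (eq_embB hm y).symm

/-- The map `ψ`. -/
def psi (hm : 0 < m) (θ : Fin k ≃. Fin k) : Fin (k * m) ≃. Fin (k * m) where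
  toFun a := (θ (blk k m a)).map fun j => embB hm j ((a : ℕ) % m) (Nat.mod_lt _ hm)
  invFun b := (θ.symm (blk k m b)).map fun i => embB hm i ((b : ℕ) % m) (Nat.mod_lt _ hm)
  inv a b := by
    rw [← Option.mem_def, ← Option.mem_def, mem_map_embB, mem_map_embB, PEquiv.mem_iff_mem]
    constructor
    · rintro ⟨h1, h2⟩; exact ⟨h1, h2.symm⟩
    · rintro ⟨h1, h2⟩; exact ⟨h1, h2.symm⟩

lemma mem_psi (hm : 0 < m) (θ : Fin k ≃. Fin k) (a b : Fin (k * m)) :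
    b ∈ psi hm θ a ↔ blk k m b ∈ θ (blk k m a) ∧ (b : ℕ) % m = (a : ℕ) % m :=
  mem_map_embB hm _ _ _ _

lemma psi_one (hm : 0 < m) : psi hm (1 : Fin k ≃. Fin k) = 1 := by
  apply PEquiv.ext
  intro a
  apply Option.ext
  intro b
  rw [← Option.mem_def, ← Option.mem_def, mem_psi]
  show (blk k m b ∈ (PEquiv.refl (Fin k)) (blk k m a) ∧ _) ↔ b ∈ (PEquiv.refl _) a
  simp only [PEquiv.refl_apply, Option.mem_def, Option.some.injEq]
  constructor
  · rintro ⟨h1, h2⟩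
    have h1' : blk k m b = blk k m a := by first | exact h1 | exact h1.symm
    have hba : b = a := blk_mod_inj hm h1' h2
    first | exact hba | exact hba.symm
  · rintro rfl; exact ⟨rfl, rfl⟩

lemma psi_mul (hm : 0 < m) (θ₁ θ₂ : Fin k ≃. Fin k) :
    psi hm (θ₁ * θ₂) = psi hm θ₁ * psi hm θ₂ := by
  apply PEquiv.ext
  intro a
  apply Option.ext
  intro b
  show b ∈ psi hm (θ₁.trans θ₂) a ↔ b ∈ (psi hm θ₁).trans (psi hm θ₂) a
  rw [mem_psi, PEquiv.mem_trans, PEquiv.mem_trans]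
  constructor
  · rintro ⟨⟨j, hj1, hj2⟩, hmod⟩
    refine ⟨embB hm j ((a : ℕ) % m) (Nat.mod_lt _ hm), ?_, ?_⟩
    · rw [mem_psi]; exact ⟨by rwa [blk_embB], embB_mod _ _ _ _⟩
    · rw [mem_psi]; rw [blk_embB, embB_mod]; exact ⟨hj2, hmod⟩
  · rintro ⟨c, hc1, hc2⟩
    rw [mem_psi] at hc1 hc2
    exact ⟨⟨blk k m c, hc1.1, hc2.1⟩, hc2.2.trans hc1.2⟩

lemma psi_injective (hm : 0 < m) : Function.Injective (psi (k := k) hm) := by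
  intro θ₁ θ₂ h
  apply PEquiv.ext
  intro i
  apply Option.ext
  intro j
  have h0 : (0 : ℕ) < m := hm
  have key : ∀ θ : Fin k ≃. Fin k,
      (embB hm j 0 h0 ∈ psi hm θ (embB hm i 0 h0)) ↔ j ∈ θ i := by
    intro θ
    rw [mem_psi, blk_embB, blk_embB, embB_mod, embB_mod]
    simp
  rw [← Option.mem_def, ← Option.mem_def, ← key θ₁, ← key θ₂, h]

/-- The crucial rigidity lemma: if `b ∈ f a` for a stable order preserving `f`,
then `f` maps the block of `a` onto the block of `b` by the canonical isomorphism. -/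
lemma psi_surj_aux (hm : 0 < m) (f : Fin (k * m) ≃. Fin (k * m))
    (hst : PStable (blk k m) f) (hop : OrdPres f) {a b : Fin (k * m)} (hab : b ∈ f a)
    (r : ℕ) (hr : r < m) : embB hm (blk k m b) r hr ∈ f (embB hm (blk k m a) r hr) := by
  obtain ⟨h1, h2, h3⟩ := hst a b hab
  have hsome : ∀ t : Fin m, (f (embB hm (blk k m a) t t.isLt)).isSome := fun t =>
    h1 _ (blk_embB _ _ _ _)
  set c : Fin m → Fin (k * m) := fun t => (f (embB hm (blk k m a) t t.isLt)).get (hsome t)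
    with hc_def
  have hc : ∀ t : Fin m, c t ∈ f (embB hm (blk k m a) (t : ℕ) t.isLt) := fun t =>
    Option.get_mem (hsome t)
  have hc' : ∀ (r : ℕ) (hr : r < m), c ⟨r, hr⟩ ∈ f (embB hm (blk k m a) r hr) := fun r hr =>
    Option.get_mem (hsome ⟨r, hr⟩)
  have hcblk : ∀ t, blk k m (c t) = blk k m b := fun t =>
    h2 _ _ (hc t) (blk_embB _ _ _ _)
  set g : Fin m → Fin m := fun t => ⟨(c t : ℕ) % m, Nat.mod_lt _ hm⟩ with hg_def
  have hcg : ∀ t, c t = embB hm (blk k m b) (g t) (g t).isLt := by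
    intro t
    rw [← hcblk t]
    exact eq_embB hm (c t)
  have hgmono : StrictMono g := by
    intro t t' htt
    have hle : c t ≤ c t' := by
      refine hop _ _ _ _ (hc t) (hc t') ?_
      show ((blk k m a : ℕ) * m + (t : ℕ)) ≤ ((blk k m a : ℕ) * m + (t' : ℕ))
      omega
    have hne : c t ≠ c t' := by
      intro hEq
      have := PEquiv.inj f (hc t) (hEq ▸ hc t')
      have : ((blk k m a : ℕ) * m + (t : ℕ)) = ((blk k m a : ℕ) * m + (t' : ℕ)) :=
        congrArg Fin.val this
      omega
    have hlt : c t < c t' := lt_of_le_of_ne hle hne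
    have e1 : (c t : ℕ) = (blk k m b : ℕ) * m + (g t : ℕ) := congrArg Fin.val (hcg t)
    have e2 : (c t' : ℕ) = (blk k m b : ℕ) * m + (g t' : ℕ) := congrArg Fin.val (hcg t')
    have : (c t : ℕ) < (c t' : ℕ) := hlt
    show (g t : ℕ) < (g t' : ℕ)
    omega
  have hgsurj : Function.Surjective g := by
    intro t
    obtain ⟨z, hz1, hz2⟩ := h3 (embB hm (blk k m b) t t.isLt) (blk_embB _ _ _ _)
    have hz3 : z = embB hm (blk k m a) ((z : ℕ) % m) (Nat.mod_lt _ hm) := by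
      rw [← hz1]; exact eq_embB hm z
    refine ⟨⟨(z : ℕ) % m, Nat.mod_lt _ hm⟩, ?_⟩
    have hcz : c ⟨(z : ℕ) % m, Nat.mod_lt _ hm⟩ ∈ f z := by
      have h0 := hc' ((z : ℕ) % m) (Nat.mod_lt _ hm)
      rwa [← hz3] at h0
    have : c ⟨(z : ℕ) % m, Nat.mod_lt _ hm⟩ = embB hm (blk k m b) t t.isLt := by
      rw [Option.mem_def] at hcz hz2
      exact Option.some_injective _ (hcz.symm.trans hz2)
    apply Fin.ext
    show (c ⟨(z : ℕ) % m, Nat.mod_lt _ hm⟩ : ℕ) % m = (t : ℕ)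
    rw [this, embB_mod]
  have hgid : g = id := by
    haveI : WellFoundedLT (Fin m) := inferInstance
    have h2' : Set.range g = Set.range (id : Fin m → Fin m) := by
      rw [Set.range_id, Set.range_eq_univ]; exact hgsurj
    exact (StrictMono.range_inj hgmono strictMono_id).1 h2'
  have hgr : g ⟨r, hr⟩ = ⟨r, hr⟩ := by rw [hgid]; rfl
  have h6 : c ⟨r, hr⟩ = embB hm (blk k m b) r hr := by
    rw [hcg ⟨r, hr⟩]
    apply Fin.ext
    show (blk k m b : ℕ) * m + ((g ⟨r, hr⟩ : Fin m) : ℕ) = (blk k m b : ℕ) * m + r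
    rw [hgr]
  have h7 := hc' r hr
  rw [h6] at h7
  exact h7

/-- The inverse construction: extract `θ` from a stable `f`. -/
def toTheta (hm : 0 < m) (f : Fin (k * m) ≃. Fin (k * m)) (hst : PStable (blk k m) f) :
    Fin k ≃. Fin k where
  toFun i := (f (embB hm i 0 hm)).map (blk k m)
  invFun j := (f.symm (embB hm j 0 hm)).map (blk k m)
  inv i j := by
    show ((f.symm (embB hm j 0 hm)).map (blk k m) = some i) ↔
      ((f (embB hm i 0 hm)).map (blk k m) = some j)
    rw [Option.map_eq_some_iff, Option.map_eq_some_iff]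
    constructor
    · rintro ⟨a, ha, hai⟩
      have ha' : embB hm j 0 hm ∈ f a := (PEquiv.mem_iff_mem f).1 ha
      obtain ⟨g1, g2, _⟩ := hst a _ ha'
      have hs : (f (embB hm i 0 hm)).isSome := g1 _ (by rw [blk_embB, hai])
      refine ⟨_, Option.eq_some_of_isSome hs, ?_⟩
      have h5 := g2 _ _ (Option.get_mem hs) (by rw [blk_embB, hai])
      rw [blk_embB] at h5
      exact h5
    · rintro ⟨b, hb, hbj⟩
      have hb' : b ∈ f (embB hm i 0 hm) := hb
      obtain ⟨_, _, g3⟩ := hst _ b hb'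
      obtain ⟨z, hz1, hz2⟩ := g3 (embB hm j 0 hm) (by rw [blk_embB, hbj])
      rw [blk_embB] at hz1
      exact ⟨z, (PEquiv.mem_iff_mem f).2 hz2, hz1⟩

lemma mem_toTheta (hm : 0 < m) (f : Fin (k * m) ≃. Fin (k * m)) (hst : PStable (blk k m) f)
    (i : Fin k) (j : Fin k) :
    j ∈ toTheta hm f hst i ↔ ∃ b, b ∈ f (embB hm i 0 hm) ∧ blk k m b = j := by
  show j ∈ (f (embB hm i 0 hm)).map (blk k m) ↔ _
  rw [Option.mem_def, Option.map_eq_some_iff]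
  exact Iff.rfl

lemma psi_toTheta (hm : 0 < m) (f : Fin (k * m) ≃. Fin (k * m))
    (hst : PStable (blk k m) f) (hop : OrdPres f) :
    psi hm (toTheta hm f hst) = f := by
  apply PEquiv.ext
  intro a
  apply Option.ext
  intro b
  rw [← Option.mem_def, ← Option.mem_def, mem_psi]
  constructor
  · rintro ⟨hθ, hmod⟩
    rw [mem_toTheta] at hθ
    obtain ⟨b0, hb0, hb0blk⟩ := hθ
    have := psi_surj_aux hm f hst hop hb0 ((a : ℕ) % m) (Nat.mod_lt _ hm)
    rw [blk_embB, hb0blk] at this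
    rw [← eq_embB hm a] at this
    have hb : b = embB hm (blk k m b) ((a : ℕ) % m) (Nat.mod_lt _ hm) := by
      apply Fin.ext
      rw [embB_coe]
      have h8 : (b : ℕ) = (blk k m b : ℕ) * m + (b : ℕ) % m := congrArg Fin.val (eq_embB hm b)
      omega
    rw [← hb] at this
    exact this
  · intro hab
    constructor
    · rw [mem_toTheta]
      have := psi_surj_aux hm f hst hop hab 0 hm
      exact ⟨_, this, blk_embB _ _ _ _⟩
    · have := psi_surj_aux hm f hst hop hab ((a : ℕ) % m) (Nat.mod_lt _ hm)
      rw [← eq_embB hm a] at this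
      have hb : b = embB hm (blk k m b) ((a : ℕ) % m) (Nat.mod_lt _ hm) := by
        rw [Option.mem_def] at hab this
        exact Option.some_injective _ (hab.symm.trans this)
      rw [hb, embB_mod]

lemma toTheta_ordPres (hm : 0 < m) (f : Fin (k * m) ≃. Fin (k * m))
    (hst : PStable (blk k m) f) (hop : OrdPres f) : OrdPres (toTheta hm f hst) := by
  intro i j i' j' hi hj hij
  rw [mem_toTheta] at hi hj
  obtain ⟨b, hb, hbi⟩ := hi
  obtain ⟨c, hc, hcj⟩ := hj
  subst hbi; subst hcj
  have hbc : b ≤ c := by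
    refine hop _ _ _ _ hb hc ?_
    show ((i : ℕ) * m + 0) ≤ ((j : ℕ) * m + 0)
    have : (i : ℕ) ≤ (j : ℕ) := hij
    exact Nat.add_le_add_right (Nat.mul_le_mul_right m this) 0
  show (blk k m b : ℕ) ≤ (blk k m c : ℕ)
  rw [blk_coe, blk_coe]
  exact Nat.div_le_div_right hbc

lemma psi_ordPres (hm : 0 < m) (θ : Fin k ≃. Fin k) (hθ : OrdPres θ) :
    OrdPres (psi hm θ) := by
  intro x y x' y' hx hy hxy
  rw [mem_psi] at hx hy
  obtain ⟨hx1, hx2⟩ := hx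
  obtain ⟨hy1, hy2⟩ := hy
  have hblk : blk k m x ≤ blk k m y := by
    show ((x : ℕ) / m) ≤ ((y : ℕ) / m)
    exact Nat.div_le_div_right hxy
  have hblk' : blk k m x' ≤ blk k m y' := hθ _ _ _ _ hx1 hy1 hblk
  rcases lt_or_eq_of_le hblk' with h | h
  · show (x' : ℕ) ≤ (y' : ℕ)
    have hx'' : (x' : ℕ) = (blk k m x' : ℕ) * m + (x' : ℕ) % m := congrArg Fin.val (eq_embB hm x')
    have hy'' : (y' : ℕ) = (blk k m y' : ℕ) * m + (y' : ℕ) % m := congrArg Fin.val (eq_embB hm y')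
    have h' : (blk k m x' : ℕ) < (blk k m y' : ℕ) := h
    have hmul : ((blk k m x' : ℕ) + 1) * m ≤ (blk k m y' : ℕ) * m :=
      Nat.mul_le_mul_right m (by omega)
    have hs : ((blk k m x' : ℕ) + 1) * m = (blk k m x' : ℕ) * m + m := by ring
    have hxm : (x' : ℕ) % m < m := Nat.mod_lt _ hm
    omega
  · -- equal image blocks: θ injective forces equal source blocks
    have hxy_blk : blk k m x = blk k m y := by
      rw [h] at hx1
      exact PEquiv.inj θ hx1 hy1
    show (x' : ℕ) ≤ (y' : ℕ)
    have hx'' : (x' : ℕ) = (blk k m x' : ℕ) * m + (x' : ℕ) % m := congrArg Fin.val (eq_embB hm x')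
    have hy'' : (y' : ℕ) = (blk k m y' : ℕ) * m + (y' : ℕ) % m := congrArg Fin.val (eq_embB hm y')
    rw [hx2] at hx''
    rw [hy2] at hy''
    have hmodle : (x : ℕ) % m ≤ (y : ℕ) % m := by
      have ex : (x : ℕ) = (blk k m x : ℕ) * m + (x : ℕ) % m := congrArg Fin.val (eq_embB hm x)
      have ey : (y : ℕ) = (blk k m y : ℕ) * m + (y : ℕ) % m := congrArg Fin.val (eq_embB hm y)
      have hbeq : (blk k m x : ℕ) = (blk k m y : ℕ) := congrArg Fin.val hxy_blk
      rw [hbeq] at ex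
      have hxy' : (x : ℕ) ≤ (y : ℕ) := hxy
      omega
    have hbeq' : (blk k m x' : ℕ) = (blk k m y' : ℕ) := congrArg Fin.val h
    rw [hbeq'] at hx''
    omega

lemma psi_mem_POIkm (hm : 0 < m) (θ : Fin k ≃. Fin k) (hθ : OrdPres θ) :
    psi hm θ ∈ POIkm k m := by
  constructor
  · -- PStable
    intro x y hxy
    rw [mem_psi] at hxy
    obtain ⟨hxy1, hxy2⟩ := hxy
    refine ⟨?_, ?_, ?_⟩
    · intro z hz
      rw [Option.isSome_iff_exists]
      refine ⟨embB hm (blk k m y) ((z : ℕ) % m) (Nat.mod_lt _ hm), ?_⟩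
      rw [← Option.mem_def, mem_psi, blk_embB, embB_mod, hz]
      exact ⟨hxy1, rfl⟩
    · intro z w hw hz
      rw [mem_psi, hz] at hw
      have h1' : blk k m x ∈ θ.symm (blk k m w) := (PEquiv.mem_iff_mem θ).2 hw.1
      have h2' : blk k m x ∈ θ.symm (blk k m y) := (PEquiv.mem_iff_mem θ).2 hxy1
      exact PEquiv.inj θ.symm h1' h2'
    · intro w hw
      refine ⟨embB hm (blk k m x) ((w : ℕ) % m) (Nat.mod_lt _ hm), blk_embB _ _ _ _, ?_⟩
      rw [mem_psi, blk_embB, embB_mod, hw]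
      exact ⟨hxy1, rfl⟩
  · -- POrdPres
    intro x y x' y' hx hy hxy
    rw [mem_psi] at hx hy
    exact hθ _ _ _ _ hx.1 hy.1 hxy

end Aux

/-- the map `ψ : POI_k → I_n` (with `n = km`) sending `θ` to the partial
permutation with domain `∪{I_i : i ∈ Dom θ}` mapping each `I_i` order-isomorphically onto
`I_{iθ}` (i.e. `b ∈ (ψ θ) a ↔ (blk b) ∈ θ (blk a)` and `b ≡ a (mod m)`) is an injective
monoid homomorphism with image `POI_n ∩ POI_{k×m}`. -/
theorem stmt11 (k m : ℕ) (hk : 2 ≤ k) (hm : 2 ≤ m) :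
    ∃ ψ : (Fin k ≃. Fin k) → (Fin (k * m) ≃. Fin (k * m)),
      (∀ θ (a b : Fin (k * m)),
        b ∈ ψ θ a ↔ (blk k m b ∈ θ (blk k m a) ∧ (b : ℕ) % m = (a : ℕ) % m)) ∧
      ψ 1 = 1 ∧
      (∀ θ₁ θ₂ : Fin k ≃. Fin k, OrdPres θ₁ → OrdPres θ₂ → ψ (θ₁ * θ₂) = ψ θ₁ * ψ θ₂) ∧
      Set.InjOn ψ {θ | OrdPres θ} ∧
      ψ '' {θ | OrdPres θ} = {f | OrdPres f} ∩ POIkm k m := by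
  have hm' : 0 < m := by omega
  have hk' : 0 < k := by omega
  refine ⟨psi hm', fun θ a b => mem_psi hm' θ a b, psi_one hm', fun θ₁ θ₂ _ _ => psi_mul hm' θ₁ θ₂,
    fun θ₁ _ θ₂ _ h => psi_injective hm' h, ?_⟩
  apply Set.eq_of_subset_of_subset
  · rintro f ⟨θ, hθ, rfl⟩
    exact ⟨psi_ordPres hm' θ hθ, psi_mem_POIkm hm' θ hθ⟩
  · rintro f ⟨hop, hst, hpop⟩
    exact ⟨toTheta hm' f hst, toTheta_ordPres hm' f hst hop, psi_toTheta hm' f hst hop⟩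

end POIPaper
end
end

section
/- For k, m ≥ 2, the submonoid POI_n ∩ POI_{k×m} of POI_{k×m} (n = km) is isomorphic to POI_k, the monoid of order preserving partial injections on a k-element chain. -/
noncomputable section

/-!
Identify `Fin (k * m)` with `Fin k × Fin m` ordered lexicographically (block, position in the
block). Then `ψ θ` acts as `θ` on blocks and as the identity on positions, so it is
multiplicative, injective, and sends an order preserving `θ` to an order preserving, `P`-stable,
`P`-order preserving map. Conversely, a `P`-stable order preserving `f` maps each block of its
domain monotonically and injectively into a single block; as the only strictly monotone self-map
of `Fin m` is the identity, `f` preserves positions and is `ψ` of the map it induces on blocks.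
-/

namespace Fin

variable {k l m : ℕ}

theorem le_iff_divNat_modNat {a b : Fin (k * m)} :
    a ≤ b ↔ a.divNat < b.divNat ∨ a.divNat = b.divNat ∧ a.modNat ≤ b.modNat := by
  have ha := Nat.div_add_mod (a : ℕ) m
  have hb := Nat.div_add_mod (b : ℕ) m
  have hra := Nat.mod_lt (a : ℕ) (Nat.pos_of_mul_pos_left a.pos)
  simp only [Fin.le_def, Fin.lt_def, Fin.ext_iff, coe_divNat, coe_modNat]
  constructor
  · intro h
    rcases (Nat.div_le_div_right (c := m) h).lt_or_eq with hq | hq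
    · exact Or.inl hq
    · rw [hq] at ha
      exact Or.inr ⟨hq, by omega⟩
  · rintro (hq | ⟨hq, hr⟩)
    · have := Nat.mul_le_mul_left m hq
      rw [Nat.mul_succ] at this
      omega
    · rw [hq] at ha
      omega

theorem eq_iff_divNat_modNat {a b : Fin (k * m)} :
    a = b ↔ a.divNat = b.divNat ∧ a.modNat = b.modNat := by
  refine ⟨fun h => h ▸ ⟨rfl, rfl⟩, fun ⟨hq, hr⟩ => ?_⟩
  rw [← divNat_mkDivMod_modNat a, hq, hr, divNat_mkDivMod_modNat]

theorem mkDivMod_eq_iff {i : Fin k} {r : Fin m} {b : Fin (k * m)} :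
    mkDivMod i r = b ↔ b.divNat = i ∧ b.modNat = r := by
  rw [eq_iff_divNat_modNat, divNat_mkDivMod, modNat_mkDivMod, eq_comm, @eq_comm _ r]

theorem mkDivMod_le_mkDivMod_iff {i j : Fin k} {r s : Fin m} :
    mkDivMod i r ≤ mkDivMod j s ↔ i < j ∨ i = j ∧ r ≤ s := by
  rw [le_iff_divNat_modNat, divNat_mkDivMod, divNat_mkDivMod, modNat_mkDivMod, modNat_mkDivMod]

theorem mem_map_mkDivMod {o : Option (Fin l)} {r : Fin m} {b : Fin (l * m)} :
    b ∈ o.map (mkDivMod · r) ↔ b.divNat ∈ o ∧ b.modNat = r := by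
  simp only [Option.mem_map, mkDivMod_eq_iff]
  exact ⟨fun ⟨_, hx, rfl, hr⟩ => ⟨hx, hr⟩, fun ⟨hx, hr⟩ => ⟨_, hx, rfl, hr⟩⟩

theorem mem_map_divNat {o : Option (Fin (k * m))} {r : Fin m} {j : Fin k}
    (ho : ∀ b ∈ o, b.modNat = r) : j ∈ o.map divNat ↔ mkDivMod j r ∈ o := by
  rw [Option.mem_map]
  constructor
  · rintro ⟨b, hb, rfl⟩
    rwa [mkDivMod_eq_iff.mpr ⟨rfl, ho b hb⟩]
  · exact fun h => ⟨_, h, divNat_mkDivMod _ _⟩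

theorem divNat_mono : Monotone (divNat : Fin (k * m) → Fin k) :=
  fun _ _ h => Nat.div_le_div_right h

end Fin

namespace POIPaper

open Fin

theorem blk_eq_divNat (k m : ℕ) : blk k m = divNat := rfl

section BlockLift

variable {k l n m : ℕ}

/-- The paper's `ψ`. -/
def blockLift (m : ℕ) (θ : Fin k ≃. Fin l) : Fin (k * m) ≃. Fin (l * m) where
  toFun a := (θ a.divNat).map (mkDivMod · a.modNat)
  invFun b := (θ.symm b.divNat).map (mkDivMod · b.modNat)
  inv _ _ :=
    mem_map_mkDivMod.trans <| (and_congr θ.mem_iff_mem eq_comm).trans mem_map_mkDivMod.symm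

theorem mem_blockLift {θ : Fin k ≃. Fin l} {a : Fin (k * m)} {b : Fin (l * m)} :
    b ∈ blockLift m θ a ↔ b.divNat ∈ θ a.divNat ∧ b.modNat = a.modNat :=
  mem_map_mkDivMod

theorem mkDivMod_mem_blockLift {θ : Fin k ≃. Fin l} {i : Fin k} {j : Fin l} {r s : Fin m} :
    mkDivMod j s ∈ blockLift m θ (mkDivMod i r) ↔ j ∈ θ i ∧ s = r := by
  rw [mem_blockLift, divNat_mkDivMod, divNat_mkDivMod, modNat_mkDivMod, modNat_mkDivMod]

theorem blockLift_refl : blockLift m (PEquiv.refl (Fin k)) = PEquiv.refl (Fin (k * m)) := by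
  ext a b
  simp only [← Option.mem_def]
  rw [mem_blockLift, PEquiv.refl_apply, PEquiv.refl_apply, Option.mem_some_iff,
    Option.mem_some_iff, eq_iff_divNat_modNat, @eq_comm _ b.modNat]

theorem blockLift_trans (θ₁ : Fin k ≃. Fin l) (θ₂ : Fin l ≃. Fin n) :
    blockLift m (θ₁.trans θ₂) = (blockLift m θ₁).trans (blockLift m θ₂) := by
  ext a c
  simp only [← Option.mem_def, PEquiv.mem_trans, mem_blockLift]
  constructor
  · rintro ⟨⟨j, hj, hc⟩, hr⟩
    exact ⟨mkDivMod j a.modNat, by simpa using hj, by simpa [hr] using hc⟩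
  · rintro ⟨b, ⟨hb, hrb⟩, hc, hrc⟩
    exact ⟨⟨b.divNat, hb, hc⟩, hrc.trans hrb⟩

theorem blockLift_injective (hm : 0 < m) :
    Function.Injective (blockLift m : (Fin k ≃. Fin l) → _) := by
  intro θ₁ θ₂ h
  ext i j
  have := congrArg (mkDivMod j ⟨0, hm⟩ ∈ · (mkDivMod i ⟨0, hm⟩)) h
  simp only [mkDivMod_mem_blockLift, and_true, eq_iff_iff] at this
  exact this

theorem ordPres_blockLift {θ : Fin k ≃. Fin k} (hθ : OrdPres θ) :
    OrdPres (blockLift m θ) := by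
  intro x y x' y' hx hy hxy
  rw [mem_blockLift] at hx hy
  rw [le_iff_divNat_modNat] at hxy ⊢
  rcases hxy with hlt | ⟨heq, hle⟩
  · refine Or.inl (lt_of_le_of_ne (hθ _ _ _ _ hx.1 hy.1 hlt.le) fun h => hlt.ne ?_)
    exact θ.inj hx.1 (h ▸ hy.1)
  · rw [heq] at hx
    exact Or.inr ⟨Option.mem_unique hx.1 hy.1, hx.2 ▸ hy.2 ▸ hle⟩

theorem pStable_blockLift (θ : Fin k ≃. Fin k) : PStable (blk k m) (blockLift m θ) := by
  intro x y hxy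
  rw [blk_eq_divNat]
  rw [mem_blockLift] at hxy
  refine ⟨fun z hz => ?_, fun z w hw hz => ?_, fun w hw => ?_⟩
  · rw [Option.isSome_iff_exists]
    exact ⟨mkDivMod y.divNat z.modNat,
      mem_blockLift.mpr ⟨by rw [divNat_mkDivMod, hz]; exact hxy.1, modNat_mkDivMod _ _⟩⟩
  · rw [mem_blockLift, hz] at hw
    exact Option.mem_unique hw.1 hxy.1
  · refine ⟨mkDivMod x.divNat w.modNat, divNat_mkDivMod _ _, ?_⟩
    exact mem_blockLift.mpr ⟨by rw [divNat_mkDivMod, hw]; exact hxy.1, (modNat_mkDivMod _ _).symm⟩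

theorem pOrdPres_blockLift {θ : Fin k ≃. Fin k} (hθ : OrdPres θ) :
    POrdPres (blk k m) (blockLift m θ) := by
  intro x y x' y' hx hy hxy
  rw [mem_blockLift] at hx hy
  exact hθ _ _ _ _ hx.1 hy.1 hxy

end BlockLift

section Converse

variable {k m : ℕ} {f : Fin (k * m) ≃. Fin (k * m)}

theorem modNat_eq_of_mem (hs : PStable (blk k m) f) (ho : OrdPres f)
    {x y : Fin (k * m)} (hxy : y ∈ f x) : y.modNat = x.modNat := by
  rw [blk_eq_divNat] at hs
  obtain ⟨hdom, hblk, -⟩ := hs x y hxy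
  have hlands : ∀ r : Fin m, ∃ s, mkDivMod y.divNat s ∈ f (mkDivMod x.divNat r) := by
    intro r
    obtain ⟨w, hw⟩ := Option.isSome_iff_exists.mp (hdom _ (divNat_mkDivMod _ _))
    exact ⟨w.modNat, by rwa [← hblk _ _ hw (divNat_mkDivMod _ _), divNat_mkDivMod_modNat]⟩
  choose g hg using hlands
  have hg_mono : StrictMono g := by
    intro r r' hr
    have hle := ho _ _ _ _ (hg r) (hg r') (mkDivMod_le_mkDivMod_iff.mpr (Or.inr ⟨rfl, hr.le⟩))
    rw [mkDivMod_le_mkDivMod_iff] at hle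
    refine lt_of_le_of_ne (hle.resolve_left (lt_irrefl _)).2 fun h => hr.ne ?_
    have := f.inj (hg r) (h ▸ hg r')
    exact (mkDivMod_eq_iff.mp this).2.symm.trans (modNat_mkDivMod _ _)
  have hx := hg x.modNat
  rw [hg_mono.apply_eq, divNat_mkDivMod_modNat] at hx
  exact (mkDivMod_eq_iff.mp (Option.mem_unique hx hxy)).2

theorem mkDivMod_mem_of_mem (hs : PStable (blk k m) f) (ho : OrdPres f)
    {x y x' : Fin (k * m)} (hxy : y ∈ f x) (hx' : x'.divNat = x.divNat) :
    mkDivMod y.divNat x'.modNat ∈ f x' := by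
  obtain ⟨hdom, hblk, -⟩ := hs x y hxy
  rw [blk_eq_divNat] at hdom hblk
  obtain ⟨y', hy'⟩ := Option.isSome_iff_exists.mp (hdom x' hx')
  rwa [mkDivMod_eq_iff.mpr ⟨hblk _ _ hy' hx', modNat_eq_of_mem hs ho hy'⟩]

/-- The action of `f` on blocks, read off at position `r` (every position gives the same map). -/
def blockQuotient (hs : PStable (blk k m) f) (ho : OrdPres f) (r : Fin m) : Fin k ≃. Fin k where
  toFun i := (f (mkDivMod i r)).map divNat
  invFun j := (f.symm (mkDivMod j r)).map divNat
  inv _ _ :=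
    (mem_map_divNat fun _ ha =>
        (modNat_eq_of_mem hs ho (f.mem_iff_mem.mp ha)).symm.trans (modNat_mkDivMod _ _)).trans <|
      f.mem_iff_mem.trans <| (mem_map_divNat fun _ hb =>
        (modNat_eq_of_mem hs ho hb).trans (modNat_mkDivMod _ _)).symm

theorem mem_blockQuotient {hs : PStable (blk k m) f} {ho : OrdPres f} {r : Fin m} {i j : Fin k} :
    j ∈ blockQuotient hs ho r i ↔ mkDivMod j r ∈ f (mkDivMod i r) :=
  mem_map_divNat fun _ hb => (modNat_eq_of_mem hs ho hb).trans (modNat_mkDivMod _ _)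

theorem ordPres_blockQuotient (hs : PStable (blk k m) f) (ho : OrdPres f) (r : Fin m) :
    OrdPres (blockQuotient hs ho r) := by
  intro i i' j j' hj hj' hi
  rw [mem_blockQuotient] at hj hj'
  have := ho _ _ _ _ hj hj' (mkDivMod_le_mkDivMod_iff.mpr (hi.lt_or_eq.imp_right (⟨·, le_rfl⟩)))
  simpa using divNat_mono this

theorem blockLift_blockQuotient (hs : PStable (blk k m) f) (ho : OrdPres f) (r : Fin m) :
    blockLift m (blockQuotient hs ho r) = f := by
  ext a b
  simp only [← Option.mem_def]
  rw [mem_blockLift, mem_blockQuotient]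
  constructor
  · rintro ⟨hb, hr⟩
    have := mkDivMod_mem_of_mem hs ho hb (x' := a) (divNat_mkDivMod _ _).symm
    rwa [divNat_mkDivMod, ← hr, divNat_mkDivMod_modNat] at this
  · intro hb
    have := mkDivMod_mem_of_mem hs ho hb (x' := mkDivMod a.divNat r) (divNat_mkDivMod _ _)
    rw [modNat_mkDivMod] at this
    exact ⟨this, modNat_eq_of_mem hs ho hb⟩

end Converse

theorem stmt12_general (k m : ℕ) (hm : 2 ≤ m) :
    ∃ ψ : (Fin k ≃. Fin k) → (Fin (k * m) ≃. Fin (k * m)),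
      ψ 1 = 1 ∧
      (∀ θ₁ θ₂ : Fin k ≃. Fin k, OrdPres θ₁ → OrdPres θ₂ → ψ (θ₁ * θ₂) = ψ θ₁ * ψ θ₂) ∧
      Set.InjOn ψ {θ | OrdPres θ} ∧
      ψ '' {θ | OrdPres θ} = {f | OrdPres f} ∩ POIkm k m := by
  refine ⟨blockLift m, blockLift_refl, fun θ₁ θ₂ _ _ => blockLift_trans θ₁ θ₂,
    (blockLift_injective (by omega)).injOn, ?_⟩
  ext f
  constructor
  · rintro ⟨θ, hθ, rfl⟩
    exact ⟨ordPres_blockLift hθ, pStable_blockLift θ, pOrdPres_blockLift hθ⟩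
  · rintro ⟨ho, hs, -⟩
    let r : Fin m := ⟨0, by omega⟩
    exact ⟨blockQuotient hs ho r, ordPres_blockQuotient hs ho r, blockLift_blockQuotient hs ho r⟩

/-- for `k, m ≥ 2`, the submonoid `POI_n ∩ POI_{k×m}` of `POI_{k×m}` (`n = km`)
is isomorphic to `POI_k`. -/
theorem stmt12 (k m : ℕ) (hk : 2 ≤ k) (hm : 2 ≤ m) :
    ∃ ψ : (Fin k ≃. Fin k) → (Fin (k * m) ≃. Fin (k * m)),
      ψ 1 = 1 ∧
      (∀ θ₁ θ₂ : Fin k ≃. Fin k, OrdPres θ₁ → OrdPres θ₂ → ψ (θ₁ * θ₂) = ψ θ₁ * ψ θ₂) ∧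
      Set.InjOn ψ {θ | OrdPres θ} ∧
      ψ '' {θ | OrdPres θ} = {f | OrdPres f} ∩ POIkm k m :=
  stmt12_general k m hm

end POIPaper
end
end

section
/- For k, m ≥ 2 and n = km, every element α of POI_{k×m} factors as α = ᾱγ where ᾱ ∈ POI_n ∩ POI_{k×m} (the order preserving elements) and γ is a unit of POI_{k×m}. -/
noncomputable section

namespace POIPaper

section Aux
variable {k m : ℕ}

lemma blk_eq_iff (a b : Fin (k * m)) : blk k m a = blk k m b ↔ (a : ℕ) / m = (b : ℕ) / m := by
  simp [blk, Fin.ext_iff]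

lemma blk_le_iff (a b : Fin (k * m)) : blk k m a ≤ blk k m b ↔ (a : ℕ) / m ≤ (b : ℕ) / m := by
  simp [blk, Fin.le_def]

def comb (hm : 0 < m) (x y : Fin (k * m)) : Fin (k * m) :=
  ⟨(x : ℕ) / m * m + (y : ℕ) % m, by
    have h1 : (x : ℕ) / m < k := by
      rw [Nat.div_lt_iff_lt_mul hm]; have := x.isLt; omega
    have h2 : (y : ℕ) % m < m := Nat.mod_lt _ hm
    have h3 : ((x : ℕ) / m + 1) * m ≤ k * m := Nat.mul_le_mul_right m h1
    have h4 : ((x : ℕ) / m + 1) * m = (x : ℕ) / m * m + m := by ring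
    omega⟩

lemma comb_coe (hm : 0 < m) (x y : Fin (k * m)) :
    (comb hm x y : ℕ) = (x : ℕ) / m * m + (y : ℕ) % m := rfl

lemma comb_div (hm : 0 < m) (x y : Fin (k * m)) :
    ((comb hm x y : ℕ)) / m = (x : ℕ) / m := by
  rw [comb_coe, mul_comm, Nat.mul_add_div hm, Nat.div_eq_of_lt (Nat.mod_lt _ hm), add_zero]

lemma comb_mod (hm : 0 < m) (x y : Fin (k * m)) :
    ((comb hm x y : ℕ)) % m = (y : ℕ) % m := by
  rw [comb_coe, mul_comm, Nat.mul_add_mod, Nat.mod_mod_of_dvd _ dvd_rfl]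

lemma comb_blk (hm : 0 < m) (x y : Fin (k * m)) :
    blk k m (comb hm x y) = blk k m x := by
  rw [blk_eq_iff, comb_div]

lemma comb_self (hm : 0 < m) (x : Fin (k * m)) : comb hm x x = x := by
  apply Fin.ext; rw [comb_coe, Nat.div_add_mod']

lemma comb_eq (hm : 0 < m) {x x' y y' : Fin (k * m)}
    (h1 : (x : ℕ) / m = (x' : ℕ) / m) (h2 : (y : ℕ) % m = (y' : ℕ) % m) :
    comb hm x y = comb hm x' y' := by
  apply Fin.ext; rw [comb_coe, comb_coe, h1, h2]

variable (α : Fin (k * m) ≃. Fin (k * m)) (hs : PStable (blk k m) α)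

lemma mem_inj {x x' y : Fin (k * m)} (h : y ∈ α x) (h' : y ∈ α x') : x = x' := by
  have h1 : α.symm y = some x := α.mem_iff_mem.mpr h
  have h2 : α.symm y = some x' := α.mem_iff_mem.mpr h'
  rw [h1] at h2; exact Option.some_injective _ h2

include hs in
lemma blk_inj {x y u v : Fin (k * m)} (hu : u ∈ α x) (hv : v ∈ α y)
    (h : blk k m u = blk k m v) : blk k m x = blk k m y := by
  obtain ⟨z, hz, hvz⟩ := (hs x u hu).2.2 v h.symm
  have := mem_inj α hvz hv
  rw [← hz, this]

/-- The order preserving part. -/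
def abar (hm : 0 < m) : Fin (k * m) ≃. Fin (k * m) where
  toFun x := (α x).map (fun y => comb hm y x)
  invFun b := (α.symm b).map (fun x => comb hm x b)
  inv a b := by
    simp only [Option.mem_def, Option.map_eq_some_iff]
    constructor
    · rintro ⟨x', hx', rfl⟩
      have hbx : b ∈ α x' := α.mem_iff_mem.mp hx'
      have hblk : blk k m (comb hm x' b) = blk k m x' := comb_blk hm x' b
      have hsome := (hs x' b hbx).1 (comb hm x' b) hblk
      obtain ⟨y, hy⟩ := Option.isSome_iff_exists.mp hsome
      have hyb : blk k m y = blk k m b := (hs x' b hbx).2.1 _ y hy hblk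
      refine ⟨y, hy, ?_⟩
      apply Fin.ext
      rw [comb_coe, comb_mod, (blk_eq_iff _ _).mp hyb, Nat.div_add_mod']
    · rintro ⟨y, hy, rfl⟩
      have hblk : blk k m (comb hm y a) = blk k m y := comb_blk hm y a
      obtain ⟨z, hz, hmem⟩ := (hs a y hy).2.2 (comb hm y a) hblk
      refine ⟨z, α.mem_iff_mem.mpr hmem, ?_⟩
      apply Fin.ext
      rw [comb_coe, comb_mod, (blk_eq_iff _ _).mp hz, Nat.div_add_mod']

/-- The unit part. -/
def gam (hm : 0 < m) : Fin (k * m) ≃. Fin (k * m) where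
  toFun b := (α.symm b).elim (some b) (fun x' => α (comb hm x' b))
  invFun c := (α.symm c).elim (some c) (fun z => some (comb hm c z))
  inv a c := by
    rcases hc : α.symm c with _ | z <;> rcases ha : α.symm a with _ | x' <;>
      simp only [hc, ha, Option.elim, Option.mem_def, Option.some_inj]
    · exact eq_comm
    · -- c not in image, a in image via x'
      constructor
      · rintro rfl; rw [hc] at ha; exact absurd ha (by simp)
      · intro hmem
        have : α.symm c = some (comb hm x' a) := α.mem_iff_mem.mpr hmem
        rw [hc] at this; exact absurd this (by simp)
    · -- c in image via z, a not in image
      have hcz : c ∈ α z := α.mem_iff_mem.mp hc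
      constructor
      · rintro rfl
        have hblk : blk k m (comb hm c z) = blk k m c := comb_blk hm c z
        obtain ⟨w, hw, hmem⟩ := (hs z c hcz).2.2 (comb hm c z) hblk
        have : α.symm (comb hm c z) = some w := α.mem_iff_mem.mpr hmem
        rw [ha] at this; exact absurd this (by simp)
      · rintro rfl
        rw [hc] at ha; exact absurd ha (by simp)
    · -- both in image
      have hcz : c ∈ α z := α.mem_iff_mem.mp hc
      have hax : a ∈ α x' := α.mem_iff_mem.mp ha
      constructor
      · rintro rfl
        -- a = comb c z
        have hblk : blk k m (comb hm c z) = blk k m c := comb_blk hm c z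
        obtain ⟨w, hw, hmem⟩ := (hs z c hcz).2.2 (comb hm c z) hblk
        have hwx : w = x' := by
          have := α.mem_iff_mem.mpr hmem
          rw [ha] at this; exact (Option.some_injective _ this).symm
        have hzx : comb hm x' (comb hm c z) = z := by
          apply Fin.ext
          rw [comb_coe, comb_mod, ← hwx, (blk_eq_iff _ _).mp hw, Nat.div_add_mod']
        rw [hzx]; exact hcz
      · intro hmem
        -- c ∈ α (comb x' a); show comb c z = a
        have hcu : c ∈ α (comb hm x' a) := hmem
        have huz : comb hm x' a = z := mem_inj α hcu hcz
        have hblku : blk k m (comb hm x' a) = blk k m x' := comb_blk hm x' a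
        have hca : blk k m c = blk k m a := (hs x' a hax).2.1 _ c hcu hblku
        apply Fin.ext
        rw [comb_coe, ← huz, comb_mod, (blk_eq_iff _ _).mp hca, Nat.div_add_mod']

lemma mem_abar (hm : 0 < m) {x b : Fin (k * m)} :
    b ∈ abar α hs hm x ↔ ∃ y, y ∈ α x ∧ b = comb hm y x := by
  simp only [abar, PEquiv.coe_mk, Option.mem_def, Option.map_eq_some_iff]
  constructor
  · rintro ⟨y, hy, hb⟩; exact ⟨y, hy, hb.symm⟩
  · rintro ⟨y, hy, rfl⟩; exact ⟨y, hy, rfl⟩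

lemma abar_blk (hm : 0 < m) {x b y : Fin (k * m)} (hy : y ∈ α x) (hb : b ∈ abar α hs hm x) :
    blk k m b = blk k m y := by
  obtain ⟨y', hy', rfl⟩ := (mem_abar α hs hm).mp hb
  rw [comb_blk]
  rw [Option.mem_def] at hy hy'
  rw [hy] at hy'
  rw [Option.some_inj.mp hy']

include hs in
lemma abar_ordPres (hm : 0 < m) (ho : POrdPres (blk k m) α)
    {x y x' y' : Fin (k * m)} (hx : x' ∈ abar α hs hm x) (hy : y' ∈ abar α hs hm y)
    (hxy : x ≤ y) : x' ≤ y' := by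
  obtain ⟨u, hu, rfl⟩ := (mem_abar α hs hm).mp hx
  obtain ⟨v, hv, rfl⟩ := (mem_abar α hs hm).mp hy
  have hb : blk k m x ≤ blk k m y := (blk_le_iff _ _).mpr (Nat.div_le_div_right hxy)
  have huv : (u : ℕ) / m ≤ (v : ℕ) / m := (blk_le_iff _ _).mp (ho x y u v hu hv hb)
  rw [Fin.le_def, comb_coe, comb_coe]
  rcases lt_or_eq_of_le huv with hlt | heq
  · have h1 : ((u : ℕ) / m + 1) * m ≤ (v : ℕ) / m * m := Nat.mul_le_mul_right m hlt
    have h2 : ((u : ℕ) / m + 1) * m = (u : ℕ) / m * m + m := by ring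
    have h3 : (x : ℕ) % m < m := Nat.mod_lt _ hm
    omega
  · have hxy' : blk k m x = blk k m y :=
      blk_inj α hs hu hv ((blk_eq_iff _ _).mpr heq)
    have hdiv : (x : ℕ) / m = (y : ℕ) / m := (blk_eq_iff _ _).mp hxy'
    have e1 := Nat.div_add_mod' (x : ℕ) m
    have e2 := Nat.div_add_mod' (y : ℕ) m
    have e3 : (x : ℕ) / m * m = (y : ℕ) / m * m := by rw [hdiv]
    have e4 : (x : ℕ) ≤ (y : ℕ) := hxy
    have e5 : (u : ℕ) / m * m = (v : ℕ) / m * m := by rw [heq]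
    omega

include hs in
lemma abar_stable (hm : 0 < m) : PStable (blk k m) (abar α hs hm) := by
  intro x y' hy'
  obtain ⟨y, hy, rfl⟩ := (mem_abar α hs hm).mp hy'
  refine ⟨?_, ?_, ?_⟩
  · intro z hz
    have h1 := (hs x y hy).1 z hz
    simp only [abar, PEquiv.coe_mk, Option.isSome_map]
    exact h1
  · intro z w hw hz
    obtain ⟨v, hv, rfl⟩ := (mem_abar α hs hm).mp hw
    rw [comb_blk, comb_blk]
    exact (hs x y hy).2.1 z v hv hz
  · intro w hw
    rw [comb_blk] at hw
    refine ⟨comb hm x w, comb_blk hm x w, ?_⟩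
    have hz : blk k m (comb hm x w) = blk k m x := comb_blk hm x w
    have hsome := (hs x y hy).1 (comb hm x w) hz
    obtain ⟨v, hv⟩ := Option.isSome_iff_exists.mp hsome
    have hvb : blk k m v = blk k m y := (hs x y hy).2.1 _ v hv hz
    rw [mem_abar]
    refine ⟨v, hv, ?_⟩
    apply Fin.ext
    rw [comb_coe, comb_mod, (blk_eq_iff _ _).mp hvb, ← (blk_eq_iff _ _).mp hw,
      Nat.div_add_mod']

include hs in
lemma abar_pOrdPres (hm : 0 < m) (ho : POrdPres (blk k m) α) :
    POrdPres (blk k m) (abar α hs hm) := by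
  intro x y x' y' hx hy hxy
  obtain ⟨u, hu, rfl⟩ := (mem_abar α hs hm).mp hx
  obtain ⟨v, hv, rfl⟩ := (mem_abar α hs hm).mp hy
  rw [comb_blk, comb_blk]
  exact ho x y u v hu hv hxy

lemma gam_apply_of_none (hm : 0 < m) {b : Fin (k * m)} (h : α.symm b = none) :
    gam α hs hm b = some b := by
  simp [gam, h]

lemma gam_apply_of_some (hm : 0 < m) {b x' : Fin (k * m)} (h : α.symm b = some x') :
    gam α hs hm b = α (comb hm x' b) := by
  simp [gam, h]

lemma gam_symm_apply (hm : 0 < m) (c : Fin (k * m)) :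
    (gam α hs hm).symm c = (α.symm c).elim (some c) (fun z => some (comb hm c z)) := rfl

include hs in
lemma gam_total (hm : 0 < m) (b : Fin (k * m)) : (gam α hs hm b).isSome := by
  rcases h : α.symm b with _ | x'
  · rw [gam_apply_of_none α hs hm h]; rfl
  · rw [gam_apply_of_some α hs hm h]
    have hbx : b ∈ α x' := α.mem_iff_mem.mp h
    exact (hs x' b hbx).1 (comb hm x' b) (comb_blk hm x' b)

lemma gam_symm_total (hm : 0 < m) (c : Fin (k * m)) : ((gam α hs hm).symm c).isSome := by
  rw [gam_symm_apply]
  rcases h : α.symm c with _ | z <;> rfl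

include hs in
lemma gam_blk (hm : 0 < m) {b c : Fin (k * m)} (h : c ∈ gam α hs hm b) :
    blk k m c = blk k m b := by
  rcases hb : α.symm b with _ | x'
  · rw [gam_apply_of_none α hs hm hb] at h
    rw [Option.mem_def, Option.some_inj] at h
    rw [h]
  · rw [gam_apply_of_some α hs hm hb] at h
    have hbx : b ∈ α x' := α.mem_iff_mem.mp hb
    exact (hs x' b hbx).2.1 (comb hm x' b) c h (comb_blk hm x' b)

include hs in
lemma gam_stable (hm : 0 < m) : PStable (blk k m) (gam α hs hm) := by
  intro x y hy
  have hyx : blk k m y = blk k m x := gam_blk α hs hm hy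
  refine ⟨fun z _ => gam_total α hs hm z, ?_, ?_⟩
  · intro z w hw hz
    rw [gam_blk α hs hm hw, hz, ← hyx]
  · intro w hw
    obtain ⟨z, hz⟩ := Option.isSome_iff_exists.mp (gam_symm_total α hs hm w)
    have hwz : w ∈ gam α hs hm z := (gam α hs hm).mem_iff_mem.mp hz
    refine ⟨z, ?_, hwz⟩
    rw [← gam_blk α hs hm hwz, hw, hyx]

include hs in
lemma gam_pOrdPres (hm : 0 < m) : POrdPres (blk k m) (gam α hs hm) := by
  intro x y x' y' hx hy hxy
  rw [gam_blk α hs hm hx, gam_blk α hs hm hy]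
  exact hxy

include hs in
lemma factorization (hm : 0 < m) : α = (abar α hs hm).trans (gam α hs hm) := by
  apply PEquiv.ext
  intro x
  rcases hx : α x with _ | y
  · have h1 : abar α hs hm x = none := by simp [abar, hx]
    show _ = ((abar α hs hm) x).bind (gam α hs hm)
    rw [h1]; rfl
  · have hy : y ∈ α x := hx
    have h1 : abar α hs hm x = some (comb hm y x) := by simp [abar, hx]
    show some y = ((abar α hs hm) x).bind (gam α hs hm)
    rw [h1, Option.bind_some]
    obtain ⟨z, hz, hmem⟩ := (hs x y hy).2.2 (comb hm y x) (comb_blk hm y x)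
    have hsymm : α.symm (comb hm y x) = some z := α.mem_iff_mem.mpr hmem
    rw [gam_apply_of_some α hs hm hsymm]
    have hzx : comb hm z (comb hm y x) = x := by
      apply Fin.ext
      rw [comb_coe, comb_mod, (blk_eq_iff _ _).mp hz, Nat.div_add_mod']
    rw [hzx, hx]

end Aux

/-- for `k, m ≥ 2` and `n = km`, every `α ∈ POI_{k×m}` factors as `α = ᾱγ`
with `ᾱ ∈ POI_n ∩ POI_{k×m}` (order preserving) and `γ` a unit of `POI_{k×m}`. -/
theorem stmt13 (k m : ℕ) (hk : 2 ≤ k) (hm : 2 ≤ m)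
    (α : Fin (k * m) ≃. Fin (k * m)) (hα : α ∈ POIkm k m) :
    ∃ αb γ : Fin (k * m) ≃. Fin (k * m),
      αb ∈ {f | OrdPres f} ∩ POIkm k m ∧ γ ∈ unitsSet k m ∧ α = αb * γ := by
  have hm' : 0 < m := by omega
  have hs : PStable (blk k m) α := hα.1
  have ho : POrdPres (blk k m) α := hα.2
  refine ⟨abar α hs hm', gam α hs hm', ⟨?_, abar_stable α hs hm', abar_pOrdPres α hs hm' ho⟩,
    ⟨⟨gam_stable α hs hm', gam_pOrdPres α hs hm'⟩, gam_total α hs hm', gam_symm_total α hs hm'⟩,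
    factorization α hs hm'⟩
  intro x y x' y' hx hy hxy
  exact abar_ordPres α hs hm' ho hx hy hxy

end POIPaper
end
end

section
/- For k, m ≥ 2, the direct product S_m^k is generated by the k elements d_1,...,d_k, where d_i = b_i c_{i+1} for 1 ≤ i ≤ k−1 and d_k = b_k c_1; here b_i (resp. c_i) is the element of S_m^k with b = (1 2 ... m) (resp. c = (1 3 4 ... m)) in coordinate i and the identity elsewhere. In particular c_1 = d_k^m, c_{i+1} = d_i^m for 1 ≤ i ≤ k−1, and b_i = d_i^{(m−1)²} for 1 ≤ i ≤ k. -/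
noncomputable section

namespace POIPaper

open Equiv Equiv.Perm in
theorem cp_pow_aux (n : ℕ) (bp cp : Equiv.Perm (Fin (n+2)))
    (hbp : bp = finRotate (n+2))
    (hcp : cp = bp * Equiv.swap 0 1) : cp ^ (n+1) = 1 := by
  rcases n with _ | n
  · subst hbp hcp
    ext x
    fin_cases x <;> simp [Equiv.swap_apply_def]
  · -- m = n + 3
    have h01 : bp (0 : Fin (n+3)) = 1 := by simp [hbp]
    have h2 : ((1 + 1 : Fin (n+3)) : ℕ) = 2 := by
      rw [Fin.val_add, Fin.val_one, Nat.mod_eq_of_lt (by omega)]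
    have hconj : cp = Equiv.swap (bp 0) (bp (bp 0)) * bp := by
      rw [hcp, Equiv.swap_apply_apply, h01]
      group
    have hadd1 : ∀ x : Fin (n+3), x + 1 ≠ x := by
      intro x h
      have h1 : (1 : Fin (n+3)) = 0 := by
        apply add_left_cancel (a := x)
        rw [add_zero]
        exact h.trans rfl |>.trans rfl
      exact one_ne_zero h1
    have hb1 : bp (1 : Fin (n+3)) ≠ 1 := by
      simp only [hbp, finRotate_succ_apply]
      exact hadd1 1
    have hb2 : bp (bp (1 : Fin (n+3))) ≠ 1 := by
      simp only [hbp, finRotate_succ_apply]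
      intro h
      have := congrArg Fin.val h
      rw [Fin.val_add, h2, Fin.val_one] at this
      rcases Nat.eq_zero_or_pos n with rfl | hn
      · simp at this
      · rw [Nat.mod_eq_of_lt (by omega)] at this
        omega
    have hcyc : cp.IsCycle := by
      rw [hconj, h01]
      exact Equiv.Perm.IsCycle.swap_mul (by rw [hbp]; exact isCycle_finRotate) hb1 hb2
    have hsupp : cp.support = Finset.univ.erase 1 := by
      ext x
      simp only [Equiv.Perm.mem_support, Finset.mem_erase, Finset.mem_univ, and_true]
      constructor
      · intro h h1
        subst h1
        apply h
        rw [hcp, Equiv.Perm.mul_apply, Equiv.swap_apply_right, h01]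
      · intro hx
        rcases eq_or_ne x 0 with rfl | hx0
        · rw [hcp]
          simp only [Equiv.Perm.mul_apply, Equiv.swap_apply_left, hbp, finRotate_succ_apply]
          intro h
          have := congrArg Fin.val h
          rw [h2] at this
          simp at this
        · rw [hcp]
          simp only [Equiv.Perm.mul_apply, Equiv.swap_apply_of_ne_of_ne hx0 hx, hbp,
            finRotate_succ_apply]
          exact hadd1 x
    have hord : orderOf cp = n + 2 := by
      rw [hcyc.orderOf, hsupp]
      rw [Finset.card_erase_of_mem (Finset.mem_univ _)]
      simp
    rw [← hord]
    exact pow_orderOf_eq_one cp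

/-- for `k, m ≥ 2`, the direct product `S_m^k` is generated by the `k`
elements `d_i = b_i c_{i+1}` (indices mod `k`, so `d_k = b_k c_1`), where `b_i`, `c_i` have
`b = (1 2 … m)`, resp. `c = ab`, in coordinate `i` and the identity elsewhere; moreover
`c_{i+1} = d_i^m` and `b_i = d_i^{(m−1)²}` for all `i`. -/
theorem stmt16 (k m : ℕ) (hk : 2 ≤ k) (hm : 2 ≤ m) :
    ∀ bp cp : Equiv.Perm (Fin m),
      bp = finRotate m → cp = bp * Equiv.swap ⟨0, by omega⟩ ⟨1, by omega⟩ →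
      ∀ d : Fin k → (Fin k → Equiv.Perm (Fin m)),
        (d = fun i =>
          Pi.mulSingle (M := fun _ : Fin k => Equiv.Perm (Fin m)) i bp *
          Pi.mulSingle (M := fun _ : Fin k => Equiv.Perm (Fin m)) (i + ⟨1, by omega⟩) cp) →
        Subgroup.closure (Set.range d) = ⊤ ∧
        (∀ i : Fin k,
          Pi.mulSingle (M := fun _ : Fin k => Equiv.Perm (Fin m)) (i + ⟨1, by omega⟩) cp
            = d i ^ m) ∧
        (∀ i : Fin k,
          Pi.mulSingle (M := fun _ : Fin k => Equiv.Perm (Fin m)) i bp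
            = d i ^ ((m - 1) ^ 2)) := by
  obtain ⟨l, rfl⟩ : ∃ l, k = l + 2 := ⟨k - 2, by omega⟩
  obtain ⟨n, rfl⟩ : ∃ n, m = n + 2 := ⟨m - 2, by omega⟩
  intro bp cp hbp hcp d hd
  have e1k : ∀ h : 1 < l + 2, (⟨1, h⟩ : Fin (l+2)) = 1 := fun h => by
    apply Fin.ext; simp
  have e0m : ∀ h : 0 < n + 2, (⟨0, h⟩ : Fin (n+2)) = 0 := fun h => by
    apply Fin.ext; simp
  have e1m : ∀ h : 1 < n + 2, (⟨1, h⟩ : Fin (n+2)) = 1 := fun h => by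
    apply Fin.ext; simp
  simp only [e1k] at hd ⊢
  rw [e0m (by omega), e1m (by omega)] at hcp
  set τ : Equiv.Perm (Fin (n+2)) := Equiv.swap 0 1 with hτ
  -- order facts
  have hbpord : orderOf bp = n + 2 := by
    rw [hbp, Equiv.Perm.IsCycle.orderOf isCycle_finRotate, support_finRotate]
    simp
  have hbp1 : bp ^ (n + 2) = 1 := by
    have h := pow_orderOf_eq_one bp
    rwa [hbpord] at h
  have hcp1 : cp ^ (n + 1) = 1 := cp_pow_aux n bp cp hbp hcp
  have hcpm : cp ^ (n + 2) = cp := by rw [pow_succ, hcp1, one_mul]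
  have hbpsq : bp ^ ((n + 1) ^ 2) = bp := by
    have h : (n + 1) ^ 2 = (n + 2) * n + 1 := by ring
    rw [h, pow_succ, pow_mul, hbp1, one_pow, one_mul]
  have hcpsq : cp ^ ((n + 1) ^ 2) = 1 := by
    rw [sq, pow_mul, hcp1, one_pow]
  have hne : ∀ i : Fin (l+2), i ≠ i + 1 := by
    intro i h
    have h1 : (0 : Fin (l+2)) = 1 := by
      apply add_left_cancel (a := i)
      rw [add_zero]; exact h
    exact zero_ne_one h1
  have hdpow : ∀ (i : Fin (l+2)) (t : ℕ),
      d i ^ t = Pi.mulSingle (M := fun _ : Fin (l+2) => Equiv.Perm (Fin (n+2))) i (bp ^ t) *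
        Pi.mulSingle (M := fun _ : Fin (l+2) => Equiv.Perm (Fin (n+2))) (i + 1) (cp ^ t) := by
    intro i t
    rw [hd]
    simp only
    rw [(Pi.mulSingle_commute (f := fun _ : Fin (l+2) => Equiv.Perm (Fin (n+2))) (hne i) bp cp).mul_pow,
      Pi.mulSingle_pow, Pi.mulSingle_pow]
  have hm1 : n + 2 - 1 = n + 1 := rfl
  have h2goal : ∀ i : Fin (l+2),
      Pi.mulSingle (M := fun _ : Fin (l+2) => Equiv.Perm (Fin (n+2))) (i + 1) cp
        = d i ^ (n + 2) := by
    intro i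
    rw [hdpow, hbp1, hcpm, Pi.mulSingle_one, one_mul]
  have h3goal : ∀ i : Fin (l+2),
      Pi.mulSingle (M := fun _ : Fin (l+2) => Equiv.Perm (Fin (n+2))) i bp
        = d i ^ ((n + 2 - 1) ^ 2) := by
    intro i
    rw [hm1, hdpow, hbpsq, hcpsq, Pi.mulSingle_one, mul_one]
  refine ⟨?_, h2goal, h3goal⟩
  -- closure
  set S := Subgroup.closure (Set.range d) with hS
  have h01 : bp 0 = 1 := by simp [hbp]
  have hgen : Subgroup.closure ({bp, τ} : Set (Equiv.Perm (Fin (n+2)))) = ⊤ := by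
    have := Equiv.Perm.closure_cycle_adjacent_swap (σ := bp)
      (by rw [hbp]; exact isCycle_finRotate) (by rw [hbp]; exact support_finRotate) 0
    rwa [h01] at this
  have hdS : ∀ i, d i ∈ S := fun i => Subgroup.subset_closure ⟨i, rfl⟩
  have hbS : ∀ i, Pi.mulSingle (M := fun _ : Fin (l+2) => Equiv.Perm (Fin (n+2))) i bp ∈ S :=
    fun i => (h3goal i) ▸ pow_mem (hdS i) _
  have hcS : ∀ j, Pi.mulSingle (M := fun _ : Fin (l+2) => Equiv.Perm (Fin (n+2))) j cp ∈ S := by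
    intro j
    have h := (h2goal (j - 1)) ▸ pow_mem (hdS (j - 1)) (n + 2)
    rwa [sub_add_cancel] at h
  have hτS : ∀ i, Pi.mulSingle (M := fun _ : Fin (l+2) => Equiv.Perm (Fin (n+2))) i τ ∈ S := by
    intro i
    have h : Pi.mulSingle (M := fun _ : Fin (l+2) => Equiv.Perm (Fin (n+2))) i τ
        = (Pi.mulSingle (M := fun _ : Fin (l+2) => Equiv.Perm (Fin (n+2))) i bp)⁻¹ *
          Pi.mulSingle (M := fun _ : Fin (l+2) => Equiv.Perm (Fin (n+2))) i cp := by
      rw [← Pi.mulSingle_inv, ← Pi.mulSingle_mul, hcp, inv_mul_cancel_left]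
    rw [h]
    exact mul_mem (inv_mem (hbS i)) (hcS i)
  have key : ∀ (i : Fin (l+2)) (σ : Equiv.Perm (Fin (n+2))),
      Pi.mulSingle (M := fun _ : Fin (l+2) => Equiv.Perm (Fin (n+2))) i σ ∈ S := by
    intro i σ
    have hmem : σ ∈ Subgroup.closure ({bp, τ} : Set (Equiv.Perm (Fin (n+2)))) :=
      hgen ▸ Subgroup.mem_top σ
    have h := Subgroup.mem_map_of_mem
      (MonoidHom.mulSingle (fun _ : Fin (l+2) => Equiv.Perm (Fin (n+2))) i) hmem
    rw [MonoidHom.map_closure] at h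
    refine (Subgroup.closure_le S).mpr ?_ h
    rintro _ ⟨y, hy, rfl⟩
    rcases hy with rfl | hy
    · exact hbS i
    · rcases hy with rfl
      exact hτS i
  rw [eq_top_iff]
  rintro x -
  rw [← Finset.noncommProd_mulSingle x]
  exact Subgroup.noncommProd_mem _ _ fun i _ => key i (x i)


end POIPaper
end
end

section
/- For k, m ≥ 2, any generating set of POI_{k×m} contains, for each j ∈ {1,...,k}, at least one element whose image is Ω_n \ I_j; consequently any generating set contains at least k elements of rank m(k−1). -/
noncomputable section

namespace POIPaper

/-! Read a factorisation `x = g₁ ⋯ gᵣ` over a generating set from the right, where the image of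
`x` is `Ω \ I_j`. A unit fixes every block setwise (it induces an order-automorphism of the chain of
blocks, which is trivial), so a trailing unit can be dropped without changing the image. The
first non-unit `g` reached has image containing `Ω \ I_j`; images in `POI` are unions of blocks
and `g` is not onto, so its image is exactly `Ω \ I_j`. Applied to the partial identities on
`Ω \ I_j`, this gives `k` generators with pairwise different images of size `m(k-1)`. -/

open Function Set

def ran {α : Type*} (f : α ≃. α) : Set α := {b | (f.symm b).isSome}

section PartialPerm

variable {α : Type*}

instance [Finite α] : Finite (α ≃. α) :=
  Finite.of_injective _ DFunLike.coe_injective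

theorem mem_ran_iff {f : α ≃. α} {b : α} : b ∈ ran f ↔ ∃ a, b ∈ f a := by
  simp [ran, Option.isSome_iff_exists, PEquiv.eq_some_iff]

theorem ran_one : ran (1 : α ≃. α) = univ :=
  eq_univ_of_forall fun _ => rfl

theorem mem_ran_mul {f g : α ≃. α} {b : α} : b ∈ ran (f * g) ↔ ∃ c ∈ g.symm b, c ∈ ran f := by
  change ((g.symm b).bind f.symm).isSome ↔ _
  cases g.symm b <;> simp [ran]

theorem ran_mul_subset (f g : α ≃. α) : ran (f * g) ⊆ ran g := fun _ hb => by
  obtain ⟨c, hc, -⟩ := mem_ran_mul.1 hb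
  exact Option.isSome_iff_exists.2 ⟨c, hc⟩

theorem ran_ofSet (s : Set α) [DecidablePred (· ∈ s)] : ran (PEquiv.ofSet s) = s := by
  ext b
  simp [mem_ran_iff]

end PartialPerm

section POISet

variable {Ω : Type*} {k : ℕ} {ι : Ω → Fin k}

theorem ofSet_preimage_mem_POISet (T : Set (Fin k))
    [DecidablePred (· ∈ ι ⁻¹' T)] : PEquiv.ofSet (ι ⁻¹' T) ∈ POISet ι := by
  have hmem : ∀ {a b}, b ∈ PEquiv.ofSet (ι ⁻¹' T) a ↔ b = a ∧ ι b ∈ T := PEquiv.mem_ofSet_iff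
  refine ⟨fun x y hxy => ?_, fun x y x' y' hx hy hxy => ?_⟩
  · obtain ⟨rfl, hx⟩ := hmem.1 hxy
    refine ⟨fun z hz => ?_, fun z w hzw hz => (hmem.1 hzw).1 ▸ hz,
      fun w hw => ⟨w, hw, hmem.2 ⟨rfl, hw ▸ hx⟩⟩⟩
    exact Option.isSome_iff_exists.2 ⟨z, hmem.2 ⟨rfl, hz ▸ hx⟩⟩
  · rw [(hmem.1 hx).1, (hmem.1 hy).1]
    exact hxy

theorem mem_ran_of_index_eq {f : Ω ≃. Ω} (hf : f ∈ POISet ι) {b b' : Ω} (hb : b ∈ ran f)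
    (hbb' : ι b' = ι b) : b' ∈ ran f := by
  obtain ⟨a, hab⟩ := mem_ran_iff.1 hb
  obtain ⟨z, -, hz⟩ := (hf.1 a b hab).2.2 b' hbb'
  exact mem_ran_iff.2 ⟨z, hz⟩

theorem index_eq_of_ran_eq_univ (hι : Surjective ι) {f : Ω ≃. Ω} (hf : f ∈ POISet ι)
    (hfran : ran f = univ) {b c : Ω} (hc : c ∈ f.symm b) : ι c = ι b := by
  have hsome : ∀ b, b ∈ ran f := fun b => hfran ▸ mem_univ b
  -- `σ t` is the block mapped onto block `t`; being strictly monotone, `σ` is the identity.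
  let σ : Fin k → Fin k := fun t => ι ((f.symm (surjInv hι t)).get (hsome _))
  have hσ_mem : ∀ t, surjInv hι t ∈ f ((f.symm (surjInv hι t)).get (hsome _)) := fun t =>
    f.mem_iff_mem.1 (Option.get_mem _)
  have hσ : ∀ {b c}, c ∈ f.symm b → ι c = σ (ι b) := by
    intro b c hc
    obtain ⟨z, hzc, hz⟩ :=
      (hf.1 c b (f.mem_iff_mem.1 hc)).2.2 (surjInv hι (ι b)) (surjInv_eq hι _)
    rw [← hzc, f.inj hz (hσ_mem _)]
  have hσ_mono : StrictMono σ := by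
    refine fun t t' htt' => lt_of_not_ge fun hle => htt'.not_ge ?_
    simpa only [surjInv_eq hι] using hf.2 _ _ _ _ (hσ_mem t') (hσ_mem t) hle
  rw [hσ hc, hσ_mono.apply_eq]

theorem ran_eq_compl_fiber_of_mul_unit [Finite Ω] (hι : Surjective ι) {f g : Ω ≃. Ω}
    (hg : g ∈ POISet ι) (hgran : ran g = univ) {j : Fin k}
    (h : ran (f * g) = {b | ι b ≠ j}) : ran f = {b | ι b ≠ j} := by
  have hsome : ∀ b, b ∈ ran g := fun b => hgran ▸ mem_univ b
  let u : Ω → Ω := fun b => (g.symm b).get (hsome b)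
  have hu : ∀ b, u b ∈ g.symm b := fun b => Option.get_mem _
  have hu_surj : Surjective u :=
    Finite.surjective_of_injective fun b b' hbb' => g.symm.inj (hu b) (hbb' ▸ hu b')
  have hu_index : ∀ b, ι (u b) = ι b := fun b => index_eq_of_ran_eq_univ hι hg hgran (hu b)
  refine (preimage_injective.2 hu_surj) ?_
  ext b
  have hb : b ∈ ran (f * g) ↔ u b ∈ ran f := by
    rw [mem_ran_mul]
    exact ⟨fun ⟨c, hc, hcf⟩ => Option.mem_unique hc (hu b) ▸ hcf, fun hbf => ⟨u b, hu b, hbf⟩⟩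
  rw [mem_preimage, ← hb, h, mem_preimage, mem_ofPred_eq, mem_ofPred_eq, hu_index]

theorem ran_eq_compl_fiber_of_mul_nonunit {f g : Ω ≃. Ω} (hg : g ∈ POISet ι)
    (hgran : ran g ≠ univ) {j : Fin k} (h : ran (f * g) = {b | ι b ≠ j}) :
    ran g = {b | ι b ≠ j} := by
  have hsub : {b | ι b ≠ j} ⊆ ran g := h ▸ ran_mul_subset f g
  obtain ⟨b₀, hb₀⟩ := (ne_univ_iff_exists_notMem _).1 hgran
  have hb₀j : ι b₀ = j := not_not.1 fun hne => hb₀ (hsub hne)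
  exact Subset.antisymm
    (fun b hb hbj => hb₀ (mem_ran_of_index_eq hg hb (hb₀j.trans hbj.symm))) hsub

theorem exists_ran_eq_compl_fiber_of_mem_closure [Finite Ω] (hι : Surjective ι)
    {G : Set (Ω ≃. Ω)} (hG : G ⊆ POISet ι) {j : Fin k} {x : Ω ≃. Ω}
    (hx : x ∈ Submonoid.closure G) (hxran : ran x = {b | ι b ≠ j}) :
    ∃ g ∈ G, ran g = {b | ι b ≠ j} := by
  induction hx using Submonoid.closure_induction_right with
  | one =>
    obtain ⟨b, hb⟩ := hι j
    have hb1 : b ∈ ran (1 : Ω ≃. Ω) := ran_one ▸ mem_univ b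
    rw [hxran] at hb1
    exact (hb1 hb).elim
  | mul_right f _ g hgG ih =>
    by_cases hgran : ran g = univ
    · exact ih (ran_eq_compl_fiber_of_mul_unit hι (hG hgG) hgran hxran)
    · exact ⟨g, hgG, ran_eq_compl_fiber_of_mul_nonunit (hG hgG) hgran hxran⟩

theorem compl_fiber_injective (hι : Surjective ι) : Injective fun j : Fin k => {b | ι b ≠ j} := by
  intro j j' h
  obtain ⟨b, rfl⟩ := hι j'
  by_contra hne
  exact (Set.ext_iff.1 h b).1 (Ne.symm hne) rfl

end POISet

section Blocks

variable {k m : ℕ}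

theorem blk_finProdFinEquiv (p : Fin k × Fin m) : blk k m (finProdFinEquiv p) = p.1 := by
  obtain ⟨⟨t, ht⟩, ⟨i, hi⟩⟩ := p
  ext
  simp [blk, finProdFinEquiv, Nat.add_mul_div_left _ _ (Nat.zero_lt_of_lt hi), Nat.div_eq_of_lt hi]

theorem blk_surjective (hm : 0 < m) : Surjective (blk k m) := fun t =>
  ⟨finProdFinEquiv (t, ⟨0, hm⟩), blk_finProdFinEquiv _⟩

theorem ncard_blk_ne (j : Fin k) : {b | blk k m b ≠ j}.ncard = m * (k - 1) := by
  have : {b | blk k m b ≠ j} = finProdFinEquiv '' ({j}ᶜ ×ˢ univ) := by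
    ext b
    obtain ⟨p, rfl⟩ := finProdFinEquiv.surjective b
    simp [blk_finProdFinEquiv]
  rw [this, ncard_image_of_injective _ finProdFinEquiv.injective, ncard_prod, ncard_univ,
    ncard_compl, ncard_singleton]
  simp [mul_comm]

end Blocks

theorem stmt18_general (k m : ℕ) (hm : 2 ≤ m)
    (G : Set (Fin (k * m) ≃. Fin (k * m)))
    (hgen : (Submonoid.closure G : Set (Fin (k * m) ≃. Fin (k * m))) = POIkm k m) :
    (∀ j : Fin k, ∃ f ∈ G, {b | (f.symm b).isSome} = {b | blk k m b ≠ j}) ∧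
    k ≤ Set.ncard {f | f ∈ G ∧ imCard f = m * (k - 1)} := by
  have hblk : Surjective (blk k m) := blk_surjective (by omega)
  have hG : G ⊆ POIkm k m := hgen ▸ Submonoid.subset_closure
  have hgens : ∀ j : Fin k, ∃ f ∈ G, ran f = {b | blk k m b ≠ j} := by
    classical
    intro j
    refine exists_ran_eq_compl_fiber_of_mem_closure hblk hG
      (x := PEquiv.ofSet (blk k m ⁻¹' {j}ᶜ)) ?_ (ran_ofSet _)
    rw [← SetLike.mem_coe, hgen]
    exact ofSet_preimage_mem_POISet {j}ᶜ
  refine ⟨hgens, ?_⟩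
  choose F hFG hFran using hgens
  have hF : Injective F := fun j j' h => compl_fiber_injective hblk (by simp only [← hFran, h])
  calc k = (range F).ncard := by rw [ncard_range_of_injective hF, Nat.card_fin]
    _ ≤ _ := ncard_le_ncard <| range_subset_iff.2 fun j =>
      show F j ∈ G ∧ (ran (F j)).ncard = _ by rw [hFran, ncard_blk_ne]; exact ⟨hFG j, rfl⟩

/-- for `k, m ≥ 2`, any generating set of `POI_{k×m}` contains, for each block
index `j`, an element whose image is `Ω_n \ I_j`; hence it contains at least `k` elements
of rank `m(k−1)`. -/
theorem stmt18 (k m : ℕ) (hk : 2 ≤ k) (hm : 2 ≤ m)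
    (G : Set (Fin (k * m) ≃. Fin (k * m)))
    (hgen : (Submonoid.closure G : Set (Fin (k * m) ≃. Fin (k * m))) = POIkm k m) :
    (∀ j : Fin k, ∃ f ∈ G, {b | (f.symm b).isSome} = {b | blk k m b ≠ j}) ∧
    k ≤ Set.ncard {f | f ∈ G ∧ imCard f = m * (k - 1)} :=
  stmt18_general k m hm G hgen

end POIPaper
end
end
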